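/- arXiv:2604.16118 — 11 statements merged into one kernel-verified Lean document; each statement's English description precedes it below -/
import Mathlib

section
/- Let W be a real symmetric n×n matrix all of whose eigenvalues lie in the interval [1,T] with T ≥ 1, let c₀ ∈ (0,1), and let f : ℝ → ℝ be a function satisfying the relative error bound |1/√t − f(t)| ≤ c₀/√t for all t ∈ [1,T]. Then for all x ∈ ℝⁿ one has (1−c₀)²·⟨x,x⟩ ≤ ⟨f(W)·W·f(W)·x, x⟩ ≤ (1+c₀)²·⟨x,x⟩, where f(W) denotes the matrix obtained by applying f to the eigenvalues of W in a spectral decomposition. -/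
open Matrix Real

lemma scalar_bound {T c₀ : ℝ} (f : ℝ → ℝ) (hc₀ : c₀ ∈ Set.Ioo (0:ℝ) 1)
    (hf : ∀ t ∈ Set.Icc (1:ℝ) T, |1 / Real.sqrt t - f t| ≤ c₀ / Real.sqrt t)
    {t : ℝ} (ht : t ∈ Set.Icc (1:ℝ) T) :
    (1 - c₀) ^ 2 ≤ f t ^ 2 * t ∧ f t ^ 2 * t ≤ (1 + c₀) ^ 2 := by
  have hs : 1 ≤ Real.sqrt t := by
    rw [show (1:ℝ) = Real.sqrt 1 by simp]
    exact Real.sqrt_le_sqrt ht.1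
  have hspos : 0 < Real.sqrt t := by linarith
  have hsq : Real.sqrt t ^ 2 = t := Real.sq_sqrt (by linarith [ht.1])
  have h := hf t ht
  rw [abs_le] at h
  have hinv : Real.sqrt t * (1 / Real.sqrt t) = 1 := by field_simp
  have hinvc : Real.sqrt t * (c₀ / Real.sqrt t) = c₀ := by field_simp
  have hm1 := mul_le_mul_of_nonneg_left h.2 hspos.le
  have hm2 := mul_le_mul_of_nonneg_left h.1 hspos.le
  have h1' : 1 - c₀ ≤ Real.sqrt t * f t := by nlinarith
  have h2' : Real.sqrt t * f t ≤ 1 + c₀ := by nlinarith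
  have hnn : (0:ℝ) ≤ 1 - c₀ := by linarith [hc₀.2]
  constructor
  · nlinarith [sq_nonneg (Real.sqrt t * f t - (1 - c₀))]
  · nlinarith [sq_nonneg (Real.sqrt t * f t)]

/-- If `f` approximates `t ↦ t^{-1/2}` with relative accuracy `c₀` on `[1,T]` and the
symmetric matrix `W` has all eigenvalues in `[1,T]`, then `f(W)·W·f(W)` is spectrally
equivalent to the identity with constants `(1∓c₀)²`.  Here `f(W)` is defined by applying
`f` to the eigenvalues in a spectral decomposition `W = U·diag(w)·Uᵀ`. -/
theorem rel_approx_inv_sqrt_spectral_equivalence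
    {n : ℕ} (T : ℝ) (hT : 1 ≤ T)
    (W U : Matrix (Fin n) (Fin n) ℝ) (w : Fin n → ℝ)
    (hWsymm : W.IsSymm)
    (hU : Uᵀ * U = 1) (hU' : U * Uᵀ = 1)
    (hW : W = U * Matrix.diagonal w * Uᵀ)
    (hw : ∀ i, w i ∈ Set.Icc (1:ℝ) T)
    (c₀ : ℝ) (hc₀ : c₀ ∈ Set.Ioo (0:ℝ) 1)
    (f : ℝ → ℝ)
    (hf : ∀ t ∈ Set.Icc (1:ℝ) T, |1 / Real.sqrt t - f t| ≤ c₀ / Real.sqrt t)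
    (x : Fin n → ℝ) :
    (1 - c₀) ^ 2 * (x ⬝ᵥ x) ≤
        ((U * Matrix.diagonal (fun i => f (w i)) * Uᵀ) * W *
          (U * Matrix.diagonal (fun i => f (w i)) * Uᵀ)).mulVec x ⬝ᵥ x ∧
      ((U * Matrix.diagonal (fun i => f (w i)) * Uᵀ) * W *
          (U * Matrix.diagonal (fun i => f (w i)) * Uᵀ)).mulVec x ⬝ᵥ x ≤
        (1 + c₀) ^ 2 * (x ⬝ᵥ x) := by
  set g : Fin n → ℝ := fun i => f (w i) ^ 2 * w i with hg
  have hM : (U * Matrix.diagonal (fun i => f (w i)) * Uᵀ) * W *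
      (U * Matrix.diagonal (fun i => f (w i)) * Uᵀ) = U * Matrix.diagonal g * Uᵀ := by
    rw [hW]
    have key : ∀ (A B : Matrix (Fin n) (Fin n) ℝ),
        (U * A * Uᵀ) * (U * B * Uᵀ) = U * (A * B) * Uᵀ := by
      intro A B
      calc (U * A * Uᵀ) * (U * B * Uᵀ) = U * A * (Uᵀ * U) * B * Uᵀ := by
            simp only [Matrix.mul_assoc]
        _ = U * (A * B) * Uᵀ := by rw [hU]; simp [Matrix.mul_assoc]
    rw [key, key]
    congr 1
    congr 1
    rw [Matrix.diagonal_mul_diagonal, Matrix.diagonal_mul_diagonal]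
    congr 1
    ext i
    ring
  rw [hM]
  have flip : ∀ (A : Matrix (Fin n) (Fin n) ℝ) (u v : Fin n → ℝ),
      (A.mulVec u) ⬝ᵥ v = u ⬝ᵥ (Aᵀ.mulVec v) := by
    intro A u v
    rw [dotProduct_comm, Matrix.dotProduct_mulVec, ← Matrix.mulVec_transpose,
      dotProduct_comm]
  set y : Fin n → ℝ := Uᵀ.mulVec x with hy
  have hxy : x ⬝ᵥ x = y ⬝ᵥ y := by
    rw [hy, flip, Matrix.transpose_transpose, Matrix.mulVec_mulVec, hU', Matrix.one_mulVec]
  have hMx : (U * Matrix.diagonal g * Uᵀ).mulVec x ⬝ᵥ x = ∑ i, g i * y i ^ 2 := by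
    rw [← Matrix.mulVec_mulVec, ← Matrix.mulVec_mulVec, flip, ← hy]
    simp only [dotProduct, Matrix.mulVec_diagonal]
    apply Finset.sum_congr rfl
    intro i _
    ring
  rw [hMx, hxy]
  have hyy : y ⬝ᵥ y = ∑ i, y i ^ 2 := by
    simp [dotProduct, sq]
  rw [hyy]
  have hb : ∀ i, (1 - c₀) ^ 2 * y i ^ 2 ≤ g i * y i ^ 2 ∧
      g i * y i ^ 2 ≤ (1 + c₀) ^ 2 * y i ^ 2 := by
    intro i
    have := scalar_bound f hc₀ hf (hw i)
    exact ⟨mul_le_mul_of_nonneg_right this.1 (sq_nonneg _),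
      mul_le_mul_of_nonneg_right this.2 (sq_nonneg _)⟩
  constructor
  · rw [Finset.mul_sum]
    exact Finset.sum_le_sum fun i _ => (hb i).1
  · rw [Finset.mul_sum]
    exact Finset.sum_le_sum fun i _ => (hb i).2
end

section
/- Let H and D be real symmetric positive definite n×n matrices and S₀ a real symmetric n×n matrix. Assume there are constants 0 < C_low ≤ C_up with C_low·⟨x,x⟩ ≤ ⟨D^{−1/2}·H·D^{−1/2}·x, x⟩ ≤ C_up·⟨x,x⟩ for all x ∈ ℝⁿ, and a constant c₀ ∈ (0,1) with (1−c₀)²·⟨x,x⟩ ≤ ⟨S₀·D·S₀·x, x⟩ ≤ (1+c₀)²·⟨x,x⟩ for all x ∈ ℝⁿ. Set α₀² = 2/(C_low·(1−c₀)² + C_up·(1+c₀)²), A = α₀²·S₀·H·S₀, and c = (C_up·(1+c₀)² − C_low·(1−c₀)²)/(C_up·(1+c₀)² + C_low·(1−c₀)²) ∈ [0,1). Then (1−c)·⟨x,x⟩ ≤ ⟨A·x, x⟩ ≤ (1+c)·⟨x,x⟩ for all x ∈ ℝⁿ, and in particular the spectral norm satisfies ‖I − A‖₂ ≤ c. -/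
open Matrix Real

private lemma symDot {n : ℕ} {M : Matrix (Fin n) (Fin n) ℝ} (hM : Mᵀ = M) (a b : Fin n → ℝ) :
    M *ᵥ a ⬝ᵥ b = a ⬝ᵥ M *ᵥ b := by
  calc M *ᵥ a ⬝ᵥ b = a ᵥ* Mᵀ ⬝ᵥ b := by rw [vecMul_transpose]
    _ = a ᵥ* M ⬝ᵥ b := by rw [hM]
    _ = a ⬝ᵥ M *ᵥ b := (dotProduct_mulVec a M b).symm

private lemma dotSelfNonneg {n : ℕ} (v : Fin n → ℝ) : 0 ≤ v ⬝ᵥ v :=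
  Finset.sum_nonneg fun _ _ => mul_self_nonneg _

private lemma opNormBound {n : ℕ} {M : Matrix (Fin n) (Fin n) ℝ} (hM : Mᵀ = M) {c : ℝ}
    (hc : 0 ≤ c) (h : ∀ v, |M *ᵥ v ⬝ᵥ v| ≤ c * (v ⬝ᵥ v)) (x : Fin n → ℝ) :
    Real.sqrt (M *ᵥ x ⬝ᵥ M *ᵥ x) ≤ c * Real.sqrt (x ⬝ᵥ x) := by
  have key : ∀ z, M *ᵥ x ⬝ᵥ z ≤ c / 2 * (x ⬝ᵥ x + z ⬝ᵥ z) := by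
    intro z
    have hzx : M *ᵥ z ⬝ᵥ x = M *ᵥ x ⬝ᵥ z := by rw [symDot hM z x, dotProduct_comm]
    have h1 := abs_le.1 (h (x + z))
    have h2 := abs_le.1 (h (x - z))
    have e1 : M *ᵥ (x + z) ⬝ᵥ (x + z)
        = M *ᵥ x ⬝ᵥ x + 2 * (M *ᵥ x ⬝ᵥ z) + M *ᵥ z ⬝ᵥ z := by
      simp [Matrix.mulVec_add, add_dotProduct, dotProduct_add, hzx]; ring
    have e2 : M *ᵥ (x - z) ⬝ᵥ (x - z)
        = M *ᵥ x ⬝ᵥ x - 2 * (M *ᵥ x ⬝ᵥ z) + M *ᵥ z ⬝ᵥ z := by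
      simp [Matrix.mulVec_sub, sub_dotProduct, dotProduct_sub, hzx]; ring
    have e3 : (x + z) ⬝ᵥ (x + z) = x ⬝ᵥ x + 2 * (x ⬝ᵥ z) + z ⬝ᵥ z := by
      simp [add_dotProduct, dotProduct_add, dotProduct_comm z x]; ring
    have e4 : (x - z) ⬝ᵥ (x - z) = x ⬝ᵥ x - 2 * (x ⬝ᵥ z) + z ⬝ᵥ z := by
      simp [sub_dotProduct, dotProduct_sub, dotProduct_comm z x]; ring
    rw [e1, e3] at h1
    rw [e2, e4] at h2
    linarith [h1.2, h2.1]
  rcases eq_or_lt_of_le (dotSelfNonneg x) with hx | hx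
  · have hx0 : x = 0 := dotProduct_self_eq_zero.1 hx.symm
    subst hx0
    simp
  rcases eq_or_lt_of_le (dotSelfNonneg (M *ᵥ x)) with hu | hu
  · rw [← hu, Real.sqrt_zero]
    positivity
  · set a := Real.sqrt (x ⬝ᵥ x) with ha'
    set b := Real.sqrt (M *ᵥ x ⬝ᵥ M *ᵥ x) with hb'
    have ha : 0 < a := Real.sqrt_pos.2 hx
    have hb : 0 < b := Real.sqrt_pos.2 hu
    have hA : x ⬝ᵥ x = a ^ 2 := (Real.sq_sqrt (dotSelfNonneg x)).symm
    have hB : M *ᵥ x ⬝ᵥ M *ᵥ x = b ^ 2 := (Real.sq_sqrt (dotSelfNonneg _)).symm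
    have hk := key ((a / b) • (M *ᵥ x))
    rw [dotProduct_smul, smul_dotProduct, dotProduct_smul] at hk
    simp only [smul_eq_mul, hA, hB] at hk
    have hk' : a * b ≤ c * a ^ 2 := by
      have hbne : b ≠ 0 := ne_of_gt hb
      have e5 : a / b * b ^ 2 = a * b := by field_simp
      rw [e5] at hk
      have e6 : a / b * (a * b) = a ^ 2 := by field_simp
      rw [e6] at hk
      linarith
    nlinarith [hk', ha]

/-- Corollary `cor:lrprecond`: if `D^{-1/2} H D^{-1/2}` is spectrally equivalent to the
identity with constants `C_low ≤ C_up` and `S₀ D S₀` is spectrally equivalent to the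
identity with constants `(1∓c₀)²`, then the rescaled matrix `A = α₀² S₀ H S₀` satisfies
`(1−c)⟨x,x⟩ ≤ ⟨Ax,x⟩ ≤ (1+c)⟨x,x⟩`, and in particular `‖I − A‖₂ ≤ c`. -/
theorem preconditioned_spectral_equivalence
    {n : ℕ} (H D S₀ : Matrix (Fin n) (Fin n) ℝ)
    (hH : H.PosDef) (hD : D.PosDef) (hS₀ : S₀.IsSymm)
    -- `R` is the symmetric positive definite square root of `D`, so `R⁻¹ = D^{-1/2}`
    (R : Matrix (Fin n) (Fin n) ℝ) (hR : R.PosDef) (hRD : R * R = D)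
    (Clow Cup : ℝ) (hClow : 0 < Clow) (hCC : Clow ≤ Cup)
    (hHD : ∀ x : Fin n → ℝ,
      Clow * (x ⬝ᵥ x) ≤ (R⁻¹ * H * R⁻¹).mulVec x ⬝ᵥ x ∧
        (R⁻¹ * H * R⁻¹).mulVec x ⬝ᵥ x ≤ Cup * (x ⬝ᵥ x))
    (c₀ : ℝ) (hc₀ : c₀ ∈ Set.Ioo (0:ℝ) 1)
    (hS₀D : ∀ x : Fin n → ℝ,
      (1 - c₀) ^ 2 * (x ⬝ᵥ x) ≤ (S₀ * D * S₀).mulVec x ⬝ᵥ x ∧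
        (S₀ * D * S₀).mulVec x ⬝ᵥ x ≤ (1 + c₀) ^ 2 * (x ⬝ᵥ x)) :
    (0 ≤ (Cup * (1 + c₀) ^ 2 - Clow * (1 - c₀) ^ 2) /
        (Cup * (1 + c₀) ^ 2 + Clow * (1 - c₀) ^ 2) ∧
      (Cup * (1 + c₀) ^ 2 - Clow * (1 - c₀) ^ 2) /
        (Cup * (1 + c₀) ^ 2 + Clow * (1 - c₀) ^ 2) < 1) ∧
    (∀ x : Fin n → ℝ,
      (1 - (Cup * (1 + c₀) ^ 2 - Clow * (1 - c₀) ^ 2) /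
          (Cup * (1 + c₀) ^ 2 + Clow * (1 - c₀) ^ 2)) * (x ⬝ᵥ x) ≤
        ((2 / (Clow * (1 - c₀) ^ 2 + Cup * (1 + c₀) ^ 2)) •
          (S₀ * H * S₀)).mulVec x ⬝ᵥ x ∧
      ((2 / (Clow * (1 - c₀) ^ 2 + Cup * (1 + c₀) ^ 2)) •
          (S₀ * H * S₀)).mulVec x ⬝ᵥ x ≤
        (1 + (Cup * (1 + c₀) ^ 2 - Clow * (1 - c₀) ^ 2) /
          (Cup * (1 + c₀) ^ 2 + Clow * (1 - c₀) ^ 2)) * (x ⬝ᵥ x)) ∧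
    (∀ x : Fin n → ℝ,
      Real.sqrt (((1 - (2 / (Clow * (1 - c₀) ^ 2 + Cup * (1 + c₀) ^ 2)) •
            (S₀ * H * S₀)).mulVec x) ⬝ᵥ
          ((1 - (2 / (Clow * (1 - c₀) ^ 2 + Cup * (1 + c₀) ^ 2)) •
            (S₀ * H * S₀)).mulVec x)) ≤
        ((Cup * (1 + c₀) ^ 2 - Clow * (1 - c₀) ^ 2) /
          (Cup * (1 + c₀) ^ 2 + Clow * (1 - c₀) ^ 2)) * Real.sqrt (x ⬝ᵥ x)) := by
  obtain ⟨hc₀0, hc₀1⟩ := hc₀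
  set p := Clow * (1 - c₀) ^ 2 with hpdef
  set q := Cup * (1 + c₀) ^ 2 with hqdef
  have hp0 : 0 < p := mul_pos hClow (pow_pos (by linarith) 2)
  have hq0 : 0 < q := mul_pos (lt_of_lt_of_le hClow hCC) (pow_pos (by linarith) 2)
  have hpq : p ≤ q := by
    rw [hpdef, hqdef]; nlinarith
  have hs0 : 0 < p + q := by linarith
  -- symmetry facts
  have hS₀' : S₀ᵀ = S₀ := hS₀
  have hRsym : Rᵀ = R := by
    have := hR.isHermitian
    rwa [Matrix.IsHermitian, conjTranspose_eq_transpose_of_trivial] at this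
  have hHsym : Hᵀ = H := by
    have := hH.isHermitian
    rwa [Matrix.IsHermitian, conjTranspose_eq_transpose_of_trivial] at this
  have hdet : IsUnit R.det := (Matrix.isUnit_iff_isUnit_det R).1 hR.isUnit
  have hRRinv : R * R⁻¹ = 1 := Matrix.mul_nonsing_inv R hdet
  have hRinvR : R⁻¹ * R = 1 := Matrix.nonsing_inv_mul R hdet
  have hRinvSym : (R⁻¹)ᵀ = R⁻¹ := by rw [Matrix.transpose_nonsing_inv, hRsym]
  -- main quadratic bound
  have hmain : ∀ x : Fin n → ℝ,
      p * (x ⬝ᵥ x) ≤ (S₀ * H * S₀) *ᵥ x ⬝ᵥ x ∧ (S₀ * H * S₀) *ᵥ x ⬝ᵥ x ≤ q * (x ⬝ᵥ x) := by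
    intro x
    set y := S₀ *ᵥ x with hy
    set z := R *ᵥ y with hz
    have keyB : ∀ B : Matrix (Fin n) (Fin n) ℝ, (S₀ * B * S₀) *ᵥ x ⬝ᵥ x = B *ᵥ y ⬝ᵥ y := by
      intro B
      have h1 : (S₀ * B * S₀) *ᵥ x = S₀ *ᵥ (B *ᵥ y) := by
        rw [hy, mulVec_mulVec, mulVec_mulVec, Matrix.mul_assoc]
      rw [h1, symDot hS₀', ← hy]
    have hHq : H *ᵥ y ⬝ᵥ y = (R⁻¹ * H * R⁻¹) *ᵥ z ⬝ᵥ z := by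
      have hassoc : R⁻¹ * H * R⁻¹ * R = R⁻¹ * H := by
        rw [Matrix.mul_assoc, hRinvR, Matrix.mul_one]
      have h1 : (R⁻¹ * H * R⁻¹) *ᵥ z = R⁻¹ *ᵥ H *ᵥ y := by
        rw [hz, mulVec_mulVec y (R⁻¹ * H * R⁻¹) R, hassoc, ← mulVec_mulVec y R⁻¹ H]
      refine (calc (R⁻¹ * H * R⁻¹) *ᵥ z ⬝ᵥ z = (R⁻¹ *ᵥ H *ᵥ y) ⬝ᵥ z := by rw [h1]
        _ = (H *ᵥ y) ⬝ᵥ R⁻¹ *ᵥ z := symDot hRinvSym _ _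
        _ = H *ᵥ y ⬝ᵥ y := by rw [hz, mulVec_mulVec y R⁻¹ R, hRinvR, one_mulVec]).symm
    have hzz : z ⬝ᵥ z = (S₀ * D * S₀) *ᵥ x ⬝ᵥ x := by
      rw [keyB D]
      calc z ⬝ᵥ z = y ⬝ᵥ R *ᵥ z := by nth_rewrite 1 [hz]; exact symDot hRsym y z
        _ = y ⬝ᵥ D *ᵥ y := by rw [hz, mulVec_mulVec y R R, hRD]
        _ = D *ᵥ y ⬝ᵥ y := dotProduct_comm _ _
    have h1 := hHD z
    have h2 := hS₀D x
    rw [← hzz] at h2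
    rw [keyB H, hHq]
    have hxnn := dotSelfNonneg x
    constructor
    · calc p * (x ⬝ᵥ x) = Clow * ((1 - c₀) ^ 2 * (x ⬝ᵥ x)) := by rw [hpdef]; ring
        _ ≤ Clow * (z ⬝ᵥ z) := by
            exact mul_le_mul_of_nonneg_left h2.1 hClow.le
        _ ≤ (R⁻¹ * H * R⁻¹) *ᵥ z ⬝ᵥ z := h1.1
    · calc (R⁻¹ * H * R⁻¹) *ᵥ z ⬝ᵥ z ≤ Cup * (z ⬝ᵥ z) := h1.2
        _ ≤ Cup * ((1 + c₀) ^ 2 * (x ⬝ᵥ x)) := by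
            exact mul_le_mul_of_nonneg_left h2.2 (by linarith)
        _ = q * (x ⬝ᵥ x) := by rw [hqdef]; ring
  -- scaled bounds
  have hbound : ∀ x : Fin n → ℝ,
      (1 - (q - p) / (q + p)) * (x ⬝ᵥ x) ≤
        ((2 / (p + q)) • (S₀ * H * S₀)) *ᵥ x ⬝ᵥ x ∧
      ((2 / (p + q)) • (S₀ * H * S₀)) *ᵥ x ⬝ᵥ x ≤ (1 + (q - p) / (q + p)) * (x ⬝ᵥ x) := by
    intro x
    obtain ⟨h1, h2⟩ := hmain x
    rw [smul_mulVec, smul_dotProduct, smul_eq_mul]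
    have e1 : 1 - (q - p) / (q + p) = 2 / (p + q) * p := by
      field_simp; ring
    have e2 : 1 + (q - p) / (q + p) = 2 / (p + q) * q := by
      field_simp; ring
    have hpos : (0:ℝ) ≤ 2 / (p + q) := by positivity
    constructor
    · rw [e1]
      have := mul_le_mul_of_nonneg_left h1 hpos
      linarith
    · rw [e2]
      have := mul_le_mul_of_nonneg_left h2 hpos
      linarith
  refine ⟨⟨div_nonneg (by linarith) (by linarith), (div_lt_one (by linarith)).2 (by linarith)⟩,
    hbound, ?_⟩
  intro x
  set M := 1 - (2 / (p + q)) • (S₀ * H * S₀) with hMdef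
  have hMsym : Mᵀ = M := by
    rw [hMdef, transpose_sub, transpose_one, transpose_smul, transpose_mul, transpose_mul,
      hS₀', hHsym, Matrix.mul_assoc]
  have hc : 0 ≤ (q - p) / (q + p) := div_nonneg (by linarith) (by linarith)
  have hquad : ∀ v : Fin n → ℝ, |M *ᵥ v ⬝ᵥ v| ≤ (q - p) / (q + p) * (v ⬝ᵥ v) := by
    intro v
    obtain ⟨h1, h2⟩ := hbound v
    rw [hMdef, sub_mulVec, one_mulVec, sub_dotProduct, abs_le]
    constructor <;> nlinarith [dotSelfNonneg v]
  exact opNormBound hMsym hc hquad x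
end

section
/- Let λ_k < λ_{k+1} be real numbers, let t ∈ [0,1], q ∈ [0,1), and let λx, λy, λz be real numbers such that λz ≤ (1−t)·λy + t·λx, λx, λy ∈ [λ_k, λ_{k+1}), and λx ≥ λy. If (λy − λ_k)/(λ_{k+1} − λy) ≤ q²·(λx − λ_k)/(λ_{k+1} − λx), then also (λz − λ_k)/(λ_{k+1} − λz) ≤ ((1−t)·q² + t)·(λx − λ_k)/(λ_{k+1} − λx). -/
/-- Lemma `perturbedq`: monotone interpolation of the Rayleigh quotient reduction factor
between two consecutive eigenvalues `λk < λk1`. -/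
theorem perturbed_reduction_factor
    (lamk lamk1 : ℝ) (hkk1 : lamk < lamk1)
    (t : ℝ) (ht : t ∈ Set.Icc (0:ℝ) 1)
    (q : ℝ) (hq : q ∈ Set.Ico (0:ℝ) 1)
    (lx ly lz : ℝ)
    (hz : lz ≤ (1 - t) * ly + t * lx)
    (hx : lx ∈ Set.Ico lamk lamk1)
    (hy : ly ∈ Set.Ico lamk lamk1)
    (hxy : lx ≥ ly)
    (hred : (ly - lamk) / (lamk1 - ly) ≤ q ^ 2 * ((lx - lamk) / (lamk1 - lx))) :
    (lz - lamk) / (lamk1 - lz) ≤ ((1 - t) * q ^ 2 + t) * ((lx - lamk) / (lamk1 - lx)) := by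
  obtain ⟨ht0, ht1⟩ := ht
  obtain ⟨hq0, hq1⟩ := hq
  obtain ⟨hxk, hxk1⟩ := hx
  obtain ⟨hyk, hyk1⟩ := hy
  set w := (1 - t) * ly + t * lx with hw
  have h1t : (0:ℝ) ≤ 1 - t := by linarith
  have hwlt : w < lamk1 := by nlinarith
  have hu : 0 < lamk1 - lx := by linarith
  have hv : 0 < lamk1 - ly := by linarith
  have hwp : 0 < lamk1 - w := by linarith
  have hzp : 0 < lamk1 - lz := by linarith
  -- monotone step
  have mono : (lz - lamk) / (lamk1 - lz) ≤ (w - lamk) / (lamk1 - w) := by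
    rw [div_le_div_iff₀ hzp hwp]
    nlinarith
  -- convexity step
  have conv : (w - lamk) / (lamk1 - w) ≤
      (1 - t) * ((ly - lamk) / (lamk1 - ly)) + t * ((lx - lamk) / (lamk1 - lx)) := by
    have hrw : (1 - t) * ((ly - lamk) / (lamk1 - ly)) + t * ((lx - lamk) / (lamk1 - lx))
        = ((1 - t) * (ly - lamk) * (lamk1 - lx) + t * (lx - lamk) * (lamk1 - ly))
          / ((lamk1 - ly) * (lamk1 - lx)) := by
      field_simp
    rw [hrw, div_le_div_iff₀ hwp (mul_pos hv hu), hw]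
    nlinarith [mul_nonneg (mul_nonneg (mul_nonneg (le_of_lt (show (0:ℝ) < lamk1 - lamk by linarith)) ht0) h1t) (sq_nonneg (ly - lx))]
  -- use hred
  have hfin : (1 - t) * ((ly - lamk) / (lamk1 - ly)) + t * ((lx - lamk) / (lamk1 - lx))
      ≤ ((1 - t) * q ^ 2 + t) * ((lx - lamk) / (lamk1 - lx)) := by
    have := mul_le_mul_of_nonneg_left hred h1t
    nlinarith
  linarith
end

section
/- Let x, x⋆, x′ ∈ ℝⁿ be nonzero vectors, set λ⋆ = λ(x⋆) and assume λ⋆ ≤ λ(x). Let t ∈ (0,1) and Δ ∈ (0,1) be such that √(1−Δ²) − ρ(x⋆)·Δ ≥ √( λ⋆ / (λ⋆ + t·(λ(x) − λ⋆)) ), and assume sin ∠_A(x′, x⋆) ≤ Δ. Then λ(x′) ≤ λ⋆ + t·(λ(x) − λ⋆). -/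
open Matrix Real

/-- Euclidean inner product weighted by the matrix `A`: `⟨x,y⟩_A = ⟨Ax,y⟩`. -/
noncomputable def ipA {n : ℕ} (A : Matrix (Fin n) (Fin n) ℝ) (x y : Fin n → ℝ) : ℝ :=
  A.mulVec x ⬝ᵥ y

/-- The `A`-norm `‖x‖_A = √⟨Ax,x⟩`. -/
noncomputable def normA {n : ℕ} (A : Matrix (Fin n) (Fin n) ℝ) (x : Fin n → ℝ) : ℝ :=
  Real.sqrt (ipA A x x)

/-- The `A`-angle `∠_A(u,x) ∈ [0,π]`. -/
noncomputable def angleA {n : ℕ} (A : Matrix (Fin n) (Fin n) ℝ) (u x : Fin n → ℝ) : ℝ :=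
  Real.arccos (ipA A u x / (normA A u * normA A x))

/-- The generalized Rayleigh quotient `λ(x) = ⟨Ax,x⟩/⟨Ex,x⟩`. -/
noncomputable def rayleigh {n : ℕ} (A E : Matrix (Fin n) (Fin n) ℝ) (x : Fin n → ℝ) : ℝ :=
  (A.mulVec x ⬝ᵥ x) / (E.mulVec x ⬝ᵥ x)

/-- The residual `r(x) = Ax − λ(x)·Ex`. -/
noncomputable def residualA {n : ℕ} (A E : Matrix (Fin n) (Fin n) ℝ) (x : Fin n → ℝ) :
    Fin n → ℝ :=
  A.mulVec x - rayleigh A E x • E.mulVec x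

/-- The normalized residual `ρ(x) = ‖r(x)‖_{A⁻¹} / ‖x‖_A`. -/
noncomputable def rhoRes {n : ℕ} (A E : Matrix (Fin n) (Fin n) ℝ) (x : Fin n → ℝ) : ℝ :=
  Real.sqrt (A⁻¹.mulVec (residualA A E x) ⬝ᵥ residualA A E x) / normA A x

/-!
Write `λ⋆ = λ(x⋆)`, `r = r(x⋆)`, `θ = ∠_A(x', x⋆)` and let `μ` be the claimed bound.
Since `⟨r, x⋆⟩ = 0`, `⟨r, x'⟩ = ⟨r, p⟩` for the `A`-orthogonal projection `p` of `x'`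
off `x⋆`, and `‖p‖_A = ‖x'‖_A sin θ`; so `|⟨r, x'⟩| ≤ ρ(x⋆) ‖x⋆‖_A ‖x'‖_A sin θ`.
As `λ⋆ ⟨Ex', x⋆⟩ = ⟨x', x⋆⟩_A - ⟨r, x'⟩`, this gives
`λ⋆ |⟨Ex', x⋆⟩| ≥ ‖x'‖_A ‖x⋆‖_A (|cos θ| - ρ(x⋆) sin θ) ≥ ‖x'‖_A ‖x⋆‖_A √(λ⋆/μ)`.
Bounding the left side by Cauchy–Schwarz for `E` and using `‖x⋆‖_A = √λ⋆ ‖x⋆‖_E`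
leaves `‖x'‖_A ≤ √μ ‖x'‖_E`, that is `λ(x') ≤ μ`.
-/

namespace Matrix

variable {ι : Type*} [Fintype ι] {M : Matrix ι ι ℝ}

lemma IsHermitian.mulVec_dotProduct_comm (hM : M.IsHermitian) (u v : ι → ℝ) :
    M *ᵥ u ⬝ᵥ v = M *ᵥ v ⬝ᵥ u := by
  rw [dotProduct_comm, dotProduct_mulVec, ← mulVec_transpose,
    ← conjTranspose_eq_transpose_of_trivial, hM.eq]

lemma PosSemidef.mulVec_dotProduct_self_nonneg (hM : M.PosSemidef) (u : ι → ℝ) :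
    0 ≤ M *ᵥ u ⬝ᵥ u := by
  simpa only [star_trivial, dotProduct_comm u] using hM.dotProduct_mulVec_nonneg u

lemma PosDef.mulVec_dotProduct_self_pos (hM : M.PosDef) {u : ι → ℝ} (hu : u ≠ 0) :
    0 < M *ᵥ u ⬝ᵥ u := by
  simpa only [star_trivial, dotProduct_comm u] using hM.dotProduct_mulVec_pos hu

lemma PosSemidef.sq_mulVec_dotProduct_le (hM : M.PosSemidef) (u v : ι → ℝ) :
    (M *ᵥ u ⬝ᵥ v) ^ 2 ≤ (M *ᵥ u ⬝ᵥ u) * (M *ᵥ v ⬝ᵥ v) := by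
  let := M.toSeminormedAddCommGroup hM
  let := M.toInnerProductSpace hM
  have h : ∀ x y : ι → ℝ, inner ℝ x y = M *ᵥ y ⬝ᵥ x := fun x y => by
    change M *ᵥ y ⬝ᵥ star x = _
    rw [star_trivial]
  rw [sq, mul_comm (M *ᵥ u ⬝ᵥ u)]
  simpa only [h] using real_inner_mul_inner_self_le v u

lemma PosDef.abs_dotProduct_le [DecidableEq ι] (hM : M.PosDef) (y z : ι → ℝ) :
    |y ⬝ᵥ z| ≤ √(M⁻¹ *ᵥ y ⬝ᵥ y) * √(M *ᵥ z ⬝ᵥ z) := by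
  have hy : M *ᵥ (M⁻¹ *ᵥ y) = y := by
    rw [mulVec_mulVec, mul_nonsing_inv M ((isUnit_iff_isUnit_det M).mp hM.isUnit), one_mulVec]
  have h := hM.posSemidef.sq_mulVec_dotProduct_le (M⁻¹ *ᵥ y) z
  rw [hy, dotProduct_comm y (M⁻¹ *ᵥ y)] at h
  rw [← sqrt_mul (hM.inv.posSemidef.mulVec_dotProduct_self_nonneg y)]
  exact abs_le_sqrt h

end Matrix

section AGeometry

variable {n : ℕ} {A : Matrix (Fin n) (Fin n) ℝ}

lemma ipA_self_nonneg (hA : A.PosSemidef) (u : Fin n → ℝ) : 0 ≤ ipA A u u :=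
  hA.mulVec_dotProduct_self_nonneg u

lemma normA_nonneg (u : Fin n → ℝ) : 0 ≤ normA A u :=
  sqrt_nonneg _

lemma sq_normA (hA : A.PosSemidef) (u : Fin n → ℝ) : normA A u ^ 2 = ipA A u u :=
  sq_sqrt (ipA_self_nonneg hA u)

lemma normA_pos (hA : A.PosDef) {u : Fin n → ℝ} (hu : u ≠ 0) : 0 < normA A u :=
  sqrt_pos.mpr (hA.mulVec_dotProduct_self_pos hu)

lemma abs_ipA_le (hA : A.PosSemidef) (u v : Fin n → ℝ) :
    |ipA A u v| ≤ normA A u * normA A v := by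
  rw [normA, normA, ← sqrt_mul (ipA_self_nonneg hA u)]
  exact abs_le_sqrt (hA.sq_mulVec_dotProduct_le u v)

lemma ipA_eq_normA_mul_normA_mul_cos_angleA (hA : A.PosSemidef) (u v : Fin n → ℝ) :
    ipA A u v = normA A u * normA A v * cos (angleA A u v) := by
  have hle := abs_ipA_le hA u v
  rcases (mul_nonneg (normA_nonneg u) (normA_nonneg v)).eq_or_lt with hd | hd
  · rw [← hd, zero_mul]
    exact abs_nonpos_iff.mp (hd ▸ hle)
  · have hc := abs_le.mp ((abs_div _ _).trans_le ((div_le_one (abs_pos_of_pos hd)).mpr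
      (hle.trans (le_abs_self _))))
    rw [angleA, cos_arccos (by linarith [hc.1]) hc.2, mul_div_cancel₀ _ hd.ne']

lemma sin_angleA_nonneg (u v : Fin n → ℝ) : 0 ≤ sin (angleA A u v) :=
  sin_nonneg_of_nonneg_of_le_pi (arccos_nonneg _) (arccos_le_pi _)

lemma normA_sub_smul_eq_normA_mul_sin_angleA (hA : A.PosDef) (u : Fin n → ℝ) {v : Fin n → ℝ}
    (hv : v ≠ 0) :
    normA A (u - (ipA A u v / ipA A v v) • v) = normA A u * sin (angleA A u v) := by
  have hvv : A *ᵥ v ⬝ᵥ v ≠ 0 := (hA.mulVec_dotProduct_self_pos hv).ne'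
  have hproj : ipA A (u - (ipA A u v / ipA A v v) • v) (u - (ipA A u v / ipA A v v) • v)
      = ipA A u u - ipA A u v ^ 2 / ipA A v v := by
    simp only [ipA, mulVec_sub, mulVec_smul, sub_dotProduct, dotProduct_sub, smul_dotProduct,
      dotProduct_smul, smul_eq_mul, hA.isHermitian.mulVec_dotProduct_comm v u]
    field_simp
    ring
  refine (sq_eq_sq₀ (normA_nonneg _) (mul_nonneg (normA_nonneg u) (sin_angleA_nonneg u v))).mp ?_
  have hv' := (normA_pos hA hv).ne'
  rw [mul_pow, sin_sq, sq_normA hA.posSemidef, hproj,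
    ipA_eq_normA_mul_normA_mul_cos_angleA hA.posSemidef u v, ← sq_normA hA.posSemidef v,
    ← sq_normA hA.posSemidef u]
  field_simp

end AGeometry

section Residual

variable {n : ℕ} {A E : Matrix (Fin n) (Fin n) ℝ} {x : Fin n → ℝ}

lemma rayleigh_pos (hA : A.PosDef) (hE : E.PosDef) (hx : x ≠ 0) : 0 < rayleigh A E x :=
  div_pos (hA.mulVec_dotProduct_self_pos hx) (hE.mulVec_dotProduct_self_pos hx)

lemma residualA_dotProduct_self (hE : E.PosDef) (hx : x ≠ 0) : residualA A E x ⬝ᵥ x = 0 := by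
  have := (hE.mulVec_dotProduct_self_pos hx).ne'
  rw [residualA, sub_dotProduct, smul_dotProduct, smul_eq_mul, rayleigh]
  field_simp
  ring

lemma residualA_dotProduct (hA : A.IsHermitian) (hE : E.IsHermitian) (u : Fin n → ℝ) :
    residualA A E x ⬝ᵥ u = ipA A u x - rayleigh A E x * ipA E u x := by
  rw [residualA, sub_dotProduct, smul_dotProduct, smul_eq_mul, ipA, ipA,
    hA.mulVec_dotProduct_comm, hE.mulVec_dotProduct_comm]

lemma abs_residualA_dotProduct_le (hA : A.PosDef) (hE : E.PosDef) (hx : x ≠ 0)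
    (u : Fin n → ℝ) :
    |residualA A E x ⬝ᵥ u| ≤ rhoRes A E x * normA A x * (normA A u * sin (angleA A u x)) := by
  have hproj :
      residualA A E x ⬝ᵥ u = residualA A E x ⬝ᵥ (u - (ipA A u x / ipA A x x) • x) := by
    rw [dotProduct_sub, dotProduct_smul, residualA_dotProduct_self hE hx, smul_zero, sub_zero]
  rw [hproj, rhoRes, div_mul_cancel₀ _ (normA_pos hA hx).ne',
    ← normA_sub_smul_eq_normA_mul_sin_angleA hA u hx]
  exact hA.abs_dotProduct_le _ _

lemma normA_mul_normA_mul_abs_cos_sub_le (hA : A.PosDef) (hE : E.PosDef) (hx : x ≠ 0)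
    (u : Fin n → ℝ) :
    normA A u * normA A x * (|cos (angleA A u x)| - rhoRes A E x * sin (angleA A u x)) ≤
      rayleigh A E x * |ipA E u x| := by
  have hres := abs_residualA_dotProduct_le hA hE hx u
  have hcos : |ipA A u x| = normA A u * normA A x * |cos (angleA A u x)| := by
    rw [ipA_eq_normA_mul_normA_mul_cos_angleA hA.posSemidef, abs_mul,
      abs_of_nonneg (mul_nonneg (normA_nonneg u) (normA_nonneg x))]
  have hsplit : rayleigh A E x * ipA E u x = ipA A u x - residualA A E x ⬝ᵥ u := by
    rw [residualA_dotProduct hA.isHermitian hE.isHermitian]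
    ring
  calc normA A u * normA A x * (|cos (angleA A u x)| - rhoRes A E x * sin (angleA A u x))
      ≤ |ipA A u x| - |residualA A E x ⬝ᵥ u| := by rw [hcos]; linarith
    _ ≤ |ipA A u x - residualA A E x ⬝ᵥ u| := abs_sub_abs_le_abs_sub _ _
    _ = rayleigh A E x * |ipA E u x| := by
      rw [← hsplit, abs_mul, abs_of_pos (rayleigh_pos hA hE hx)]

end Residual

lemma Real.sqrt_one_sub_sq_le_abs_cos {θ Δ : ℝ} (h₀ : 0 ≤ sin θ) (h : sin θ ≤ Δ) :
    √(1 - Δ ^ 2) ≤ |cos θ| := by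
  rw [← sqrt_sq_eq_abs, cos_sq']
  exact sqrt_le_sqrt (by nlinarith)

section RayleighBound

variable {n : ℕ} {A E : Matrix (Fin n) (Fin n) ℝ} {x u : Fin n → ℝ} {μ : ℝ}

lemma rhoRes_nonneg : 0 ≤ rhoRes A E x :=
  div_nonneg (sqrt_nonneg _) (normA_nonneg x)

lemma normA_eq_sqrt_rayleigh_mul_normA (hE : E.PosDef) (hx : x ≠ 0) :
    normA A x = √(rayleigh A E x) * normA E x := by
  have hEx : 0 < ipA E x x := hE.mulVec_dotProduct_self_pos hx
  rw [normA, normA, ← sqrt_mul' _ hEx.le]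
  exact congrArg sqrt (div_mul_cancel₀ _ hEx.ne').symm

lemma rayleigh_le_of_normA_le (hA : A.PosSemidef) (hE : E.PosSemidef) (hμ : 0 ≤ μ)
    (h : normA A u ≤ √μ * normA E u) : rayleigh A E u ≤ μ := by
  have hsq := pow_le_pow_left₀ (normA_nonneg u) h 2
  rw [mul_pow, sq_sqrt hμ, sq_normA hA, sq_normA hE] at hsq
  exact div_le_of_le_mul₀ (ipA_self_nonneg hE u) hμ hsq

lemma rayleigh_le_of_normA_mul_normA_mul_sqrt_le (hA : A.PosDef) (hE : E.PosDef) (hx : x ≠ 0)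
    (hμ : 0 < μ)
    (h : normA A u * normA A x * √(rayleigh A E x / μ) ≤
      rayleigh A E x * (normA E u * normA E x)) :
    rayleigh A E u ≤ μ := by
  refine rayleigh_le_of_normA_le hA.posSemidef hE.posSemidef hμ.le ?_
  have hlam := rayleigh_pos hA hE hx
  have hEx := normA_pos hE hx
  rw [normA_eq_sqrt_rayleigh_mul_normA hE hx, sqrt_div' _ hμ.le] at h
  set s := √(rayleigh A E x)
  have hs2 : rayleigh A E x = s * s := (mul_self_sqrt hlam.le).symm
  refine le_of_mul_le_mul_right ?_ (by positivity : 0 < rayleigh A E x * normA E x / √μ)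
  calc normA A u * (rayleigh A E x * normA E x / √μ)
      = normA A u * (s * normA E x) * (s / √μ) := by rw [hs2]; ring
    _ ≤ rayleigh A E x * (normA E u * normA E x) := h
    _ = √μ * normA E u * (rayleigh A E x * normA E x / √μ) := by field_simp

end RayleighBound

theorem rayleigh_bound_under_truncation_general
    {n : ℕ}
    (A E : Matrix (Fin n) (Fin n) ℝ) (hA : A.PosDef) (hE : E.PosDef)
    (x xs x' : Fin n → ℝ) (hxs : xs ≠ 0)
    (hls : rayleigh A E xs ≤ rayleigh A E x)
    (t : ℝ) (ht : t ∈ Set.Ioo (0:ℝ) 1)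
    (Δ : ℝ)
    (hcond : Real.sqrt (1 - Δ ^ 2) - rhoRes A E xs * Δ ≥
      Real.sqrt (rayleigh A E xs /
        (rayleigh A E xs + t * (rayleigh A E x - rayleigh A E xs))))
    (hangle : Real.sin (angleA A x' xs) ≤ Δ) :
    rayleigh A E x' ≤ rayleigh A E xs + t * (rayleigh A E x - rayleigh A E xs) := by
  set μ := rayleigh A E xs + t * (rayleigh A E x - rayleigh A E xs)
  have hlam := rayleigh_pos hA hE hxs
  have hμ : 0 < μ := by nlinarith [ht.1]
  have hcos := sqrt_one_sub_sq_le_abs_cos (sin_angleA_nonneg x' xs) hangle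
  have hρ : rhoRes A E xs * sin (angleA A x' xs) ≤ rhoRes A E xs * Δ :=
    mul_le_mul_of_nonneg_left hangle rhoRes_nonneg
  refine rayleigh_le_of_normA_mul_normA_mul_sqrt_le hA hE hxs hμ ?_
  calc normA A x' * normA A xs * √(rayleigh A E xs / μ)
      ≤ normA A x' * normA A xs *
          (|cos (angleA A x' xs)| - rhoRes A E xs * sin (angleA A x' xs)) :=
        mul_le_mul_of_nonneg_left (by linarith) (mul_nonneg (normA_nonneg _) (normA_nonneg _))
    _ ≤ rayleigh A E xs * |ipA E x' xs| := normA_mul_normA_mul_abs_cos_sub_le hA hE hxs x'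
    _ ≤ rayleigh A E xs * (normA E x' * normA E xs) :=
        mul_le_mul_of_nonneg_left (abs_ipA_le hE.posSemidef x' xs) hlam.le

/-- Lemma on adaptive truncation of iterates: a bound on the `A`-angle between the
truncated iterate `x'` and `x⋆` controls the increase of the Rayleigh quotient. -/
theorem rayleigh_bound_under_truncation
    {n : ℕ} (hn : 1 ≤ n)
    (A E : Matrix (Fin n) (Fin n) ℝ) (hA : A.PosDef) (hE : E.PosDef)
    (x xs x' : Fin n → ℝ) (hx : x ≠ 0) (hxs : xs ≠ 0) (hx' : x' ≠ 0)
    (hls : rayleigh A E xs ≤ rayleigh A E x)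
    (t : ℝ) (ht : t ∈ Set.Ioo (0:ℝ) 1)
    (Δ : ℝ) (hΔ : Δ ∈ Set.Ioo (0:ℝ) 1)
    (hcond : Real.sqrt (1 - Δ ^ 2) - rhoRes A E xs * Δ ≥
      Real.sqrt (rayleigh A E xs /
        (rayleigh A E xs + t * (rayleigh A E x - rayleigh A E xs))))
    (hangle : Real.sin (angleA A x' xs) ≤ Δ) :
    rayleigh A E x' ≤ rayleigh A E xs + t * (rayleigh A E x - rayleigh A E xs) :=
  rayleigh_bound_under_truncation_general A E hA hE x xs x' hxs hls t ht Δ hcond hangle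
end

section
/- For every nonzero x ∈ ℝⁿ one has (1 − λ₁/λ(x)) ≤ sin² ∠_A(u₁, x) ≤ δ·(1 − λ₁/λ(x)). -/
open Matrix Real

/-!
Split `x = w + c • u₁` with `c = ⟨u₁, x⟩_A`, so that `w` is `A`-orthogonal to `u₁`, hence also
`E`-orthogonal since `A u₁ = λ₁ E u₁`. Then `sin² ∠_A(u₁, x) = ‖w‖²_A / ‖x‖²_A`, and because
`A - λ₁ E` annihilates `u₁`, `1 - λ₁ / λ(x) = (‖w‖²_A - λ₁ ⟨E w, w⟩) / ‖x‖²_A`. The lower bound is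
`λ₁ ⟨E w, w⟩ ≥ 0`. The upper bound reduces to the gap inequality `λ₂ ⟨E w, w⟩ ≤ ⟨A w, w⟩` for `w`
that is `E`-orthogonal to `u₁`, which is the spectral theorem for `E^{-1/2} A E^{-1/2}`: its
eigenvectors are the `E^{1/2} u` for generalized eigenpairs `(μ, u)`, and by simplicity of `λ₁`
the only ones with `μ < λ₂` are the multiples of `E^{1/2} u₁`, which are orthogonal to `E^{1/2} w`.
-/

theorem LinearMap.IsSymmetric.mul_inner_self_le_of_forall_eigen_lt
    {V : Type*} [NormedAddCommGroup V] [InnerProductSpace ℝ V] [FiniteDimensional ℝ V]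
    {T : V →ₗ[ℝ] V} (hT : T.IsSymmetric) {t : ℝ} {y : V}
    (hy : ∀ v μ, T v = μ • v → μ < t → inner ℝ v y = 0) :
    t * inner ℝ y y ≤ inner ℝ (T y) y := by
  set b := hT.eigenvectorBasis rfl
  set ν := hT.eigenvalues rfl
  have hterm : ∀ i, t * (inner ℝ y (b i) * inner ℝ (b i) y) ≤
      inner ℝ (T y) (b i) * inner ℝ (b i) y := by
    intro i
    have heig : T (b i) = ν i • b i := by simp [b, ν]
    rw [hT y, heig, inner_smul_right, real_inner_comm (b i) y]
    rcases lt_or_ge (ν i) t with hlt | hge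
    · simp [hy _ _ heig hlt]
    · nlinarith [mul_self_nonneg (inner ℝ (b i) y)]
  rw [← b.sum_inner_mul_inner y y, ← b.sum_inner_mul_inner (T y) y, Finset.mul_sum]
  exact Finset.sum_le_sum fun i _ => hterm i

namespace Matrix

variable {ι : Type*} [Fintype ι]

theorem IsSymm.mulVec_dotProduct_comm {α : Type*} [CommSemiring α]
    {M : Matrix ι ι α} (hM : M.IsSymm) (a b : ι → α) : M *ᵥ a ⬝ᵥ b = a ⬝ᵥ M *ᵥ b := by
  rw [dotProduct_mulVec, ← mulVec_transpose, hM.eq]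

theorem IsSymm.mulVec_add_smul_dotProduct {α : Type*} [CommRing α]
    {M : Matrix ι ι α} (hM : M.IsSymm) {u w : ι → α} (huw : M *ᵥ u ⬝ᵥ w = 0) (c : α) :
    M *ᵥ (w + c • u) ⬝ᵥ (w + c • u) = M *ᵥ w ⬝ᵥ w + c ^ 2 * (M *ᵥ u ⬝ᵥ u) := by
  have hwu : M *ᵥ w ⬝ᵥ u = 0 := by rw [hM.mulVec_dotProduct_comm, dotProduct_comm, huw]
  simp only [mulVec_add, mulVec_smul, add_dotProduct, dotProduct_add, smul_dotProduct,
    dotProduct_smul, smul_eq_mul, huw, hwu]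
  ring

theorem IsSymm.mulVec_add_smul_dotProduct_of_mulVec_eq_zero {α : Type*} [CommRing α]
    {M : Matrix ι ι α} (hM : M.IsSymm) {u : ι → α} (hu : M *ᵥ u = 0)
    (w : ι → α) (c : α) : M *ᵥ (w + c • u) ⬝ᵥ (w + c • u) = M *ᵥ w ⬝ᵥ w := by
  rw [hM.mulVec_add_smul_dotProduct (by rw [hu, zero_dotProduct]), hu, zero_dotProduct,
    mul_zero, add_zero]

theorem IsHermitian.mul_dotProduct_self_le_of_forall_eigen_lt [DecidableEq ι]
    {S : Matrix ι ι ℝ} (hS : S.IsHermitian) {t : ℝ} {y : ι → ℝ}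
    (hy : ∀ v μ, S *ᵥ v = μ • v → μ < t → v ⬝ᵥ y = 0) :
    t * (y ⬝ᵥ y) ≤ S *ᵥ y ⬝ᵥ y := by
  have h := (isSymmetric_toEuclideanLin_iff.mpr hS).mul_inner_self_le_of_forall_eigen_lt
    (y := WithLp.toLp 2 y) (t := t) fun v μ hv hμ => by
      simpa [EuclideanSpace.inner_eq_star_dotProduct, dotProduct_comm] using
        hy v.ofLp μ (congrArg WithLp.ofLp hv) hμ
  change t * (y ⬝ᵥ y) ≤ y ⬝ᵥ (S *ᵥ y) at h
  rwa [dotProduct_comm y (S *ᵥ y)] at h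

open scoped MatrixOrder in
theorem IsHermitian.mul_dotProduct_le_of_forall_pencil_eigen_lt [DecidableEq ι]
    {A E : Matrix ι ι ℝ} (hA : A.IsHermitian) (hE : E.PosDef) {t : ℝ}
    {w : ι → ℝ} (hw : ∀ u μ, A *ᵥ u = μ • E *ᵥ u → μ < t → E *ᵥ u ⬝ᵥ w = 0) :
    t * (E *ᵥ w ⬝ᵥ w) ≤ A *ᵥ w ⬝ᵥ w := by
  set C := CFC.sqrt E
  have hC : C.IsSymm := isHermitian_iff_isSymm.mp (CFC.sqrt_nonneg E).posSemidef.isHermitian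
  have hCC : C * C = E := CFC.sqrt_mul_sqrt_self E hE.posSemidef.nonneg
  have hCdet : IsUnit C.det := (isUnit_iff_isUnit_det C).mp <|
    CFC.isUnit_sqrt_iff_isStrictlyPositive.mpr (isStrictlyPositive_iff_posDef.mpr hE)
  have hCinv : C⁻¹.IsSymm := by rw [IsSymm, transpose_nonsing_inv, hC.eq]
  have hT : (C⁻¹ * A * C⁻¹).IsHermitian := by
    simpa [conjTranspose_eq_transpose_of_trivial, hCinv.eq] using
      isHermitian_conjTranspose_mul_mul C⁻¹ hA
  have hCC_dot : ∀ u, C *ᵥ u ⬝ᵥ C *ᵥ w = E *ᵥ u ⬝ᵥ w := fun u => by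
    rw [hC.mulVec_dotProduct_comm, mulVec_mulVec, hCC,
      (isHermitian_iff_isSymm.mp hE.isHermitian).mulVec_dotProduct_comm]
  have hT_C : ∀ u, (C⁻¹ * A * C⁻¹) *ᵥ (C *ᵥ u) = C⁻¹ *ᵥ (A *ᵥ u) := fun u => by
    rw [mulVec_mulVec, mul_assoc, nonsing_inv_mul C hCdet, mul_one, ← mulVec_mulVec]
  have key := hT.mul_dotProduct_self_le_of_forall_eigen_lt (t := t) (y := C *ᵥ w) ?_
  · rwa [hCC_dot, hT_C, hCinv.mulVec_dotProduct_comm, mulVec_mulVec, nonsing_inv_mul C hCdet,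
      one_mulVec] at key
  intro v μ hv hμ
  obtain ⟨u, rfl⟩ : ∃ u, v = C *ᵥ u :=
    ⟨C⁻¹ *ᵥ v, by rw [mulVec_mulVec, mul_nonsing_inv C hCdet, one_mulVec]⟩
  rw [hCC_dot]
  refine hw u μ ?_ hμ
  rw [hT_C] at hv
  simpa only [mulVec_mulVec, ← mul_assoc, mul_nonsing_inv C hCdet, one_mul, mulVec_smul,
    hCC] using congrArg (C *ᵥ ·) hv

theorem IsHermitian.mul_dotProduct_le_of_orthogonal_first_eigenvector [DecidableEq ι]
    {A E : Matrix ι ι ℝ} (hA : A.IsHermitian) (hE : E.PosDef)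
    {lam1 lam2 : ℝ} {u1 : ι → ℝ}
    (hsimple : ∀ v, A *ᵥ v = lam1 • E *ᵥ v → ∃ c : ℝ, v = c • u1)
    (hmin : ∀ μ : ℝ, (∃ v, v ≠ 0 ∧ A *ᵥ v = μ • E *ᵥ v) → μ = lam1 ∨ lam2 ≤ μ)
    {w : ι → ℝ} (hw : E *ᵥ u1 ⬝ᵥ w = 0) :
    lam2 * (E *ᵥ w ⬝ᵥ w) ≤ A *ᵥ w ⬝ᵥ w := by
  refine hA.mul_dotProduct_le_of_forall_pencil_eigen_lt hE fun u μ hu hμ => ?_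
  rcases eq_or_ne u 0 with rfl | hu0
  · simp
  obtain rfl : μ = lam1 := (hmin μ ⟨u, hu0, hu⟩).resolve_right hμ.not_ge
  obtain ⟨c, rfl⟩ := hsimple u hu
  rw [mulVec_smul, smul_dotProduct, hw, smul_zero]

end Matrix

section AAngle

variable {n : ℕ} {A : Matrix (Fin n) (Fin n) ℝ}

theorem ipA_sub_ipA_smul_eq_zero {u : Fin n → ℝ} (hu : normA A u = 1) (x : Fin n → ℝ) :
    ipA A u (x - ipA A u x • u) = 0 := by
  rw [ipA, dotProduct_sub, dotProduct_smul, smul_eq_mul]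
  change ipA A u x - ipA A u x * ipA A u u = 0
  rw [Real.sqrt_eq_one.mp hu, mul_one, sub_self]

theorem ipA_self_eq_add_sq (hA : A.IsSymm) {u : Fin n → ℝ} (hu : normA A u = 1)
    (x : Fin n → ℝ) :
    ipA A x x = ipA A (x - ipA A u x • u) (x - ipA A u x • u) + ipA A u x ^ 2 := by
  have h := hA.mulVec_add_smul_dotProduct (ipA_sub_ipA_smul_eq_zero hu x) (ipA A u x)
  rw [sub_add_cancel] at h
  rw [ipA, h]
  change _ + _ * ipA A u u = _
  rw [Real.sqrt_eq_one.mp hu, mul_one]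
  rfl

theorem sin_angleA_sq (hA : A.PosSemidef) {u : Fin n → ℝ} (hu : normA A u = 1)
    {x : Fin n → ℝ} (hx : ipA A x x ≠ 0) :
    Real.sin (angleA A u x) ^ 2 =
      ipA A (x - ipA A u x • u) (x - ipA A u x • u) / ipA A x x := by
  have hX := ipA_self_eq_add_sq (isHermitian_iff_isSymm.mp hA.isHermitian) hu x
  have hw : 0 ≤ ipA A (x - ipA A u x • u) (x - ipA A u x • u) := by
    simpa [ipA, dotProduct_comm] using hA.dotProduct_mulVec_nonneg (x - ipA A u x • u)
  have hXpos : 0 < ipA A x x := lt_of_le_of_ne (hX ▸ by positivity) hx.symm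
  have hsq : (ipA A u x / Real.sqrt (ipA A x x)) ^ 2 = ipA A u x ^ 2 / ipA A x x := by
    rw [div_pow, Real.sq_sqrt hXpos.le]
  rw [angleA, hu, one_mul, normA, Real.sin_arccos, Real.sq_sqrt, hsq]
  · field_simp
    linarith
  · rw [hsq, sub_nonneg, div_le_one hXpos]
    linarith

end AAngle

theorem one_sub_div_rayleigh_eq {n : ℕ} {A E : Matrix (Fin n) (Fin n) ℝ} (hA : A.IsSymm)
    (hE : E.IsSymm) {μ : ℝ} {u : Fin n → ℝ} (hu : A *ᵥ u = μ • E *ᵥ u) (c : ℝ)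
    {x : Fin n → ℝ} (hx : A *ᵥ x ⬝ᵥ x ≠ 0) :
    1 - μ / rayleigh A E x =
      (A *ᵥ (x - c • u) ⬝ᵥ (x - c • u) - μ * (E *ᵥ (x - c • u) ⬝ᵥ (x - c • u))) /
        (A *ᵥ x ⬝ᵥ x) := by
  have hquad : ∀ v, (A - μ • E) *ᵥ v ⬝ᵥ v = A *ᵥ v ⬝ᵥ v - μ * (E *ᵥ v ⬝ᵥ v) := fun v => by
    rw [sub_mulVec, smul_mulVec, sub_dotProduct, smul_dotProduct, smul_eq_mul]
  have hker : (A - μ • E) *ᵥ u = 0 := by rw [sub_mulVec, smul_mulVec, hu, sub_self]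
  have h := (hA.sub (hE.smul μ)).mulVec_add_smul_dotProduct_of_mulVec_eq_zero hker (x - c • u) c
  rw [sub_add_cancel, hquad, hquad] at h
  rw [rayleigh, div_div_eq_mul_div, ← h, sub_div, div_self hx]

theorem le_mul_sub_of_gap {a e lam1 lam2 δ : ℝ} (he : 0 ≤ e) (h1 : 0 ≤ lam1)
    (h12 : lam1 < lam2) (hgap : lam2 * e ≤ a) (hδ : lam2 / (lam2 - lam1) ≤ δ) :
    a ≤ δ * (a - lam1 * e) := by
  have hδ' : lam2 ≤ δ * (lam2 - lam1) := (div_le_iff₀ (sub_pos.mpr h12)).mp hδ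
  have hδ1 : 1 ≤ δ := by nlinarith
  nlinarith [mul_nonneg (sub_nonneg.mpr hδ1) (sub_nonneg.mpr hgap),
    mul_nonneg (sub_nonneg.mpr hδ') he]

theorem sin_sq_angle_rayleigh_bounds_general
    {n : ℕ}
    (A E : Matrix (Fin n) (Fin n) ℝ) (hA : A.PosDef) (hE : E.PosDef)
    (lam1 lam2 : ℝ) (u1 : Fin n → ℝ)
    (hu1 : A.mulVec u1 = lam1 • E.mulVec u1) (hu1norm : normA A u1 = 1)
    (h1pos : 0 < lam1) (h12 : lam1 < lam2)
    (hsimple : ∀ v : Fin n → ℝ, A.mulVec v = lam1 • E.mulVec v → ∃ c : ℝ, v = c • u1)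
    (hmin : ∀ μ : ℝ, (∃ v : Fin n → ℝ, v ≠ 0 ∧ A.mulVec v = μ • E.mulVec v) →
      μ = lam1 ∨ lam2 ≤ μ)
    (δ : ℝ) (hδ : δ ≥ lam2 / (lam2 - lam1))
    (x : Fin n → ℝ) (hx : x ≠ 0) :
    1 - lam1 / rayleigh A E x ≤ Real.sin (angleA A u1 x) ^ 2 ∧
      Real.sin (angleA A u1 x) ^ 2 ≤ δ * (1 - lam1 / rayleigh A E x) := by
  set w := x - ipA A u1 x • u1
  have hEw : E *ᵥ u1 ⬝ᵥ w = 0 := by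
    have h : lam1 * (E *ᵥ u1 ⬝ᵥ w) = 0 := by
      rw [← smul_eq_mul, ← smul_dotProduct, ← hu1]
      exact ipA_sub_ipA_smul_eq_zero hu1norm x
    exact (mul_eq_zero.mp h).resolve_left h1pos.ne'
  have hgap : lam2 * (E *ᵥ w ⬝ᵥ w) ≤ A *ᵥ w ⬝ᵥ w :=
    hA.isHermitian.mul_dotProduct_le_of_orthogonal_first_eigenvector hE hsimple hmin hEw
  have hEw_nonneg : 0 ≤ E *ᵥ w ⬝ᵥ w := by
    simpa [dotProduct_comm] using hE.posSemidef.dotProduct_mulVec_nonneg w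
  have hXpos : 0 < A *ᵥ x ⬝ᵥ x := by simpa [dotProduct_comm] using hA.dotProduct_mulVec_pos hx
  rw [sin_angleA_sq hA.posSemidef hu1norm hXpos.ne', one_sub_div_rayleigh_eq
    (isHermitian_iff_isSymm.mp hA.isHermitian) (isHermitian_iff_isSymm.mp hE.isHermitian) hu1
    (ipA A u1 x) hXpos.ne', ← mul_div_assoc]
  constructor
  · exact div_le_div_of_nonneg_right (sub_le_self _ (mul_nonneg h1pos.le hEw_nonneg)) hXpos.le
  · exact div_le_div_of_nonneg_right (le_mul_sub_of_gap hEw_nonneg h1pos.le h12 hgap hδ)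
      hXpos.le

/-- Proposition `raylangleb`, first part: two-sided bound of the squared `A`-angle
between `x` and the first generalized eigenvector in terms of the Rayleigh quotient. -/
theorem sin_sq_angle_rayleigh_bounds
    {n : ℕ} (hn : 1 ≤ n)
    (A E : Matrix (Fin n) (Fin n) ℝ) (hA : A.PosDef) (hE : E.PosDef)
    (lam1 lam2 : ℝ) (u1 : Fin n → ℝ)
    (hu1 : A.mulVec u1 = lam1 • E.mulVec u1) (hu1ne : u1 ≠ 0) (hu1norm : normA A u1 = 1)
    (h1pos : 0 < lam1) (h12 : lam1 < lam2)
    (hsimple : ∀ v : Fin n → ℝ, A.mulVec v = lam1 • E.mulVec v → ∃ c : ℝ, v = c • u1)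
    (hlam2 : ∃ v : Fin n → ℝ, v ≠ 0 ∧ A.mulVec v = lam2 • E.mulVec v)
    (hmin : ∀ μ : ℝ, (∃ v : Fin n → ℝ, v ≠ 0 ∧ A.mulVec v = μ • E.mulVec v) →
      μ = lam1 ∨ lam2 ≤ μ)
    (δ : ℝ) (hδ : δ ≥ lam2 / (lam2 - lam1))
    (x : Fin n → ℝ) (hx : x ≠ 0) :
    1 - lam1 / rayleigh A E x ≤ Real.sin (angleA A u1 x) ^ 2 ∧
      Real.sin (angleA A u1 x) ^ 2 ≤ δ * (1 - lam1 / rayleigh A E x) :=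
  sin_sq_angle_rayleigh_bounds_general A E hA hE lam1 lam2 u1 hu1 hu1norm h1pos h12 hsimple hmin δ
    hδ x hx
end

section
/- Let L ∈ ℝ be such that μ(w) ≥ L for every nonzero w ∈ V. Let v, p ∈ V be nonzero with μ(v) > L, and let α ∈ [0, π/2] be such that ∠(v,p) ≤ α. Then (μ(p) − L)/(μ(v) − L) ≥ ( max{ cos α − (ϱ(v)/(μ(v) − L))·sin α, 0 } )². -/
/-!
The shifted operator `T = B - L • 1` is positive, so Cauchy–Schwarz for its form gives
`⟪T v, p⟫² ≤ ⟪T v, v⟫ ⟪T p, p⟫ = (μ(v) - L)(μ(p) - L) ‖v‖² ‖p‖²`.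
Writing `T v = r + (μ(v) - L) v` with the residual `r ⊥ v`, only the component of `p`
orthogonal to `v`, of length `‖p‖ sin ∠(v, p)`, sees `r`; hence
`⟪T v, p⟫ ≥ ‖v‖ ‖p‖ ((μ(v) - L) cos ∠(v, p) - ϱ(v) sin ∠(v, p))`,
and `cos θ - k sin θ` only decreases when `θ` grows to `α ≤ π / 2`.
-/

open InnerProductGeometry Real RealInnerProductSpace

/-- The Rayleigh quotient `μ(v) = ⟨Bv,v⟩/⟨v,v⟩` of a linear operator `B`. -/
noncomputable def rayQuot {V : Type*} [NormedAddCommGroup V] [InnerProductSpace ℝ V]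
    (B : V →ₗ[ℝ] V) (v : V) : ℝ :=
  ⟪B v, v⟫ / ⟪v, v⟫

/-- The normalized residual `ϱ(v) = ‖Bv − μ(v)v‖/‖v‖`. -/
noncomputable def resQuot {V : Type*} [NormedAddCommGroup V] [InnerProductSpace ℝ V]
    (B : V →ₗ[ℝ] V) (v : V) : ℝ :=
  ‖B v - rayQuot B v • v‖ / ‖v‖

namespace LinearMap.IsPositive

variable {V : Type*} [NormedAddCommGroup V] [InnerProductSpace ℝ V]

theorem real_inner_map_sq_le {T : V →ₗ[ℝ] V} (hT : T.IsPositive) (x y : V) :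
    ⟪T x, y⟫ ^ 2 ≤ ⟪T x, x⟫ * ⟪T y, y⟫ := by
  have hCS := LinearMap.BilinForm.apply_mul_apply_le_of_forall_zero_le ((innerₗ V).comp T)
    hT.inner_nonneg_left x y
  simp only [LinearMap.comp_apply, innerₗ_apply_apply] at hCS
  rw [hT.isSymmetric y x, real_inner_comm (T x) y] at hCS
  rwa [sq]

end LinearMap.IsPositive

namespace InnerProductGeometry

variable {V : Type*} [NormedAddCommGroup V] [InnerProductSpace ℝ V]

theorem norm_sub_starProjection_singleton (x y : V) :
    ‖y - (ℝ ∙ x).starProjection y‖ = ‖y‖ * sin (angle x y) := by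
  rcases eq_or_ne x 0 with rfl | hx
  · simp [angle_zero_left]
  have hcos := cos_angle_mul_norm_mul_norm x y
  refine (sq_eq_sq₀ (norm_nonneg _) (mul_nonneg (norm_nonneg _) (sin_angle_nonneg x y))).1 ?_
  rw [Submodule.starProjection_singleton, RCLike.ofReal_real_eq_id, id,
    ← real_inner_self_eq_norm_sq, mul_pow, sin_sq]
  simp only [inner_sub_left, inner_sub_right, real_inner_smul_left, real_inner_smul_right,
    real_inner_comm x y]
  rw [real_inner_self_eq_norm_sq, real_inner_self_eq_norm_sq, ← hcos]
  field_simp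
  ring

theorem abs_real_inner_le_norm_mul_sin_angle_of_inner_eq_zero {r x : V} (h : ⟪r, x⟫ = 0)
    (y : V) : |⟪r, y⟫| ≤ ‖r‖ * (‖y‖ * sin (angle x y)) := by
  have hproj : ⟪r, y⟫ = ⟪r, y - (ℝ ∙ x).starProjection y⟫ := by
    rw [Submodule.starProjection_singleton, inner_sub_right, real_inner_smul_right, h,
      mul_zero, sub_zero]
  rw [hproj, ← norm_sub_starProjection_singleton]
  exact abs_real_inner_le_norm _ _

end InnerProductGeometry

theorem Real.cos_sub_mul_sin_antitoneOn {k : ℝ} (hk : 0 ≤ k) :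
    AntitoneOn (fun x => cos x - k * sin x) (Set.Icc 0 (π / 2)) := by
  intro a ha b hb hab
  have hcos : cos b ≤ cos a :=
    cos_le_cos_of_nonneg_of_le_pi ha.1 (hb.2.trans (by linarith [pi_pos])) hab
  have hsin : sin a ≤ sin b :=
    sin_le_sin_of_le_of_le_pi_div_two (by linarith [pi_pos, ha.1]) hb.2 hab
  dsimp only
  linarith [mul_le_mul_of_nonneg_left hsin hk]

section RayleighQuotient

variable {V : Type*} [NormedAddCommGroup V] [InnerProductSpace ℝ V] (B : V →ₗ[ℝ] V)

theorem rayQuot_sub_mul_norm_sq (L : ℝ) (w : V) :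
    (rayQuot B w - L) * ‖w‖ ^ 2 = ⟪(B - L • 1) w, w⟫ := by
  rcases eq_or_ne w 0 with rfl | hw
  · simp
  rw [rayQuot, ← real_inner_self_eq_norm_sq]
  simp only [LinearMap.sub_apply, LinearMap.smul_apply, Module.End.one_apply, inner_sub_left,
    real_inner_smul_left]
  field_simp

theorem isPositive_sub_smul_one_of_le_rayQuot {B} (hB : B.IsSymmetric) {L : ℝ}
    (hL : ∀ w : V, w ≠ 0 → L ≤ rayQuot B w) : (B - L • 1).IsPositive := by
  refine ⟨hB.sub (LinearMap.IsSymmetric.id.smul (conj_trivial L)), fun w => ?_⟩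
  rw [RCLike.re_to_real, ← rayQuot_sub_mul_norm_sq]
  rcases eq_or_ne w 0 with rfl | hw
  · simp
  exact mul_nonneg (sub_nonneg.2 (hL w hw)) (sq_nonneg _)

theorem inner_sub_rayQuot_smul_self (v : V) : ⟪B v - rayQuot B v • v, v⟫ = 0 := by
  rcases eq_or_ne v 0 with rfl | hv
  · simp
  rw [inner_sub_left, real_inner_smul_left, rayQuot, div_mul_cancel₀ _ (inner_self_ne_zero.2 hv),
    sub_self]

theorem norm_sub_rayQuot_smul (v : V) : ‖B v - rayQuot B v • v‖ = resQuot B v * ‖v‖ := by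
  rcases eq_or_ne v 0 with rfl | hv
  · simp
  rw [resQuot, div_mul_cancel₀ _ (norm_ne_zero_iff.2 hv)]

theorem resQuot_nonneg (v : V) : 0 ≤ resQuot B v :=
  div_nonneg (norm_nonneg _) (norm_nonneg _)

theorem le_inner_sub_smul_one_apply (L : ℝ) (v p : V) :
    ‖v‖ * ‖p‖ * ((rayQuot B v - L) * cos (angle v p) - resQuot B v * sin (angle v p)) ≤
      ⟪(B - L • 1) v, p⟫ := by
  have hsplit : (B - L • 1) v = (B v - rayQuot B v • v) + (rayQuot B v - L) • v := by
    simp only [LinearMap.sub_apply, LinearMap.smul_apply, Module.End.one_apply, sub_smul]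
    abel
  have hres := abs_real_inner_le_norm_mul_sin_angle_of_inner_eq_zero
    (inner_sub_rayQuot_smul_self B v) p
  rw [norm_sub_rayQuot_smul] at hres
  rw [hsplit, inner_add_left, real_inner_smul_left, ← cos_angle_mul_norm_mul_norm v p]
  nlinarith [neg_abs_le ⟪B v - rayQuot B v • v, p⟫]

end RayleighQuotient

theorem rayleigh_perturbation_bound_general
    {V : Type*} [NormedAddCommGroup V] [InnerProductSpace ℝ V]
    (B : V →ₗ[ℝ] V) (hB : LinearMap.IsSymmetric B)
    (L : ℝ) (hL : ∀ w : V, w ≠ 0 → L ≤ rayQuot B w)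
    (v p : V) (hv : v ≠ 0) (hp : p ≠ 0)
    (hμv : L < rayQuot B v)
    (α : ℝ) (hα : α ∈ Set.Icc (0:ℝ) (Real.pi / 2))
    (hangle : InnerProductGeometry.angle v p ≤ α) :
    (max (Real.cos α - resQuot B v / (rayQuot B v - L) * Real.sin α) 0) ^ 2 ≤
      (rayQuot B p - L) / (rayQuot B v - L) := by
  set m := rayQuot B v - L
  set c := cos α - resQuot B v / m * sin α
  have hm : 0 < m := sub_pos.2 hμv
  rcases le_or_gt c 0 with hc | hc
  · rw [max_eq_right hc, sq, zero_mul]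
    exact div_nonneg (sub_nonneg.2 (hL p hp)) hm.le
  rw [max_eq_left hc.le, le_div_iff₀ hm]
  have hθ : angle v p ∈ Set.Icc 0 (π / 2) := ⟨angle_nonneg v p, hangle.trans hα.2⟩
  have hcθ : m * c ≤ m * cos (angle v p) - resQuot B v * sin (angle v p) := by
    have hanti := cos_sub_mul_sin_antitoneOn (div_nonneg (resQuot_nonneg B v) hm.le) hθ hα hangle
    calc m * c ≤ m * (cos (angle v p) - resQuot B v / m * sin (angle v p)) :=
          mul_le_mul_of_nonneg_left hanti hm.le
      _ = m * cos (angle v p) - resQuot B v * sin (angle v p) := by field_simp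
  have hlower : ‖v‖ * ‖p‖ * (m * c) ≤ ⟪(B - L • 1) v, p⟫ :=
    (mul_le_mul_of_nonneg_left hcθ (by positivity)).trans (le_inner_sub_smul_one_apply B L v p)
  have hCS := (isPositive_sub_smul_one_of_le_rayQuot hB hL).real_inner_map_sq_le v p
  rw [← rayQuot_sub_mul_norm_sq, ← rayQuot_sub_mul_norm_sq] at hCS
  have hvp : 0 < (‖v‖ * ‖p‖) ^ 2 * m := by positivity
  refine le_of_mul_le_mul_left ?_ hvp
  calc (‖v‖ * ‖p‖) ^ 2 * m * (c ^ 2 * m) = (‖v‖ * ‖p‖ * (m * c)) ^ 2 := by ring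
    _ ≤ ⟪(B - L • 1) v, p⟫ ^ 2 := pow_le_pow_left₀ (by positivity) hlower 2
    _ ≤ m * ‖v‖ ^ 2 * ((rayQuot B p - L) * ‖p‖ ^ 2) := hCS
    _ = (‖v‖ * ‖p‖) ^ 2 * m * (rayQuot B p - L) := by ring

/-- Theorem `thm:pertbound`: lower bound on the Rayleigh quotient of a perturbed vector
in terms of the angle of the perturbation and the normalized residual. -/
theorem rayleigh_perturbation_bound
    {V : Type*} [NormedAddCommGroup V] [InnerProductSpace ℝ V] [FiniteDimensional ℝ V]
    (B : V →ₗ[ℝ] V) (hB : LinearMap.IsSymmetric B)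
    (L : ℝ) (hL : ∀ w : V, w ≠ 0 → L ≤ rayQuot B w)
    (v p : V) (hv : v ≠ 0) (hp : p ≠ 0)
    (hμv : L < rayQuot B v)
    (α : ℝ) (hα : α ∈ Set.Icc (0:ℝ) (Real.pi / 2))
    (hangle : InnerProductGeometry.angle v p ≤ α) :
    (max (Real.cos α - resQuot B v / (rayQuot B v - L) * Real.sin α) 0) ^ 2 ≤
      (rayQuot B p - L) / (rayQuot B v - L) :=
  rayleigh_perturbation_bound_general B hB L hL v p hv hp hμv α hα hangle
end

section
/- Let V be a two-dimensional real inner product space and B : V → V a self-adjoint linear operator with eigenvalues a ≥ b. Then for every nonzero x ∈ V, ‖Bx − μ(x)·x‖² / ‖x‖² = (a − μ(x))·(μ(x) − b); equivalently ϱ(x)² = (a − μ(x))·(μ(x) − b). -/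
open InnerProductGeometry Real RealInnerProductSpace

section

variable {V : Type*} [NormedAddCommGroup V] [InnerProductSpace ℝ V]

theorem inner_apply_self_eq_rayQuot_mul_norm_sq (B : V →ₗ[ℝ] V) (x : V) :
    ⟪B x, x⟫ = rayQuot B x * ‖x‖ ^ 2 := by
  rcases eq_or_ne x 0 with rfl | hx
  · simp
  · rw [rayQuot, real_inner_self_eq_norm_sq, div_mul_cancel₀ _ (by positivity)]

theorem norm_sub_rayQuot_smul_sq_of_inner_eq_zero (B : V →ₗ[ℝ] V) {a b : ℝ} {x : V}
    (h : ⟪B x - a • x, B x - b • x⟫ = 0) :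
    ‖B x - rayQuot B x • x‖ ^ 2 = (a - rayQuot B x) * (rayQuot B x - b) * ‖x‖ ^ 2 := by
  have hμ := inner_apply_self_eq_rayQuot_mul_norm_sq B x
  simp only [inner_sub_left, inner_sub_right, real_inner_smul_left, real_inner_smul_right,
    real_inner_comm (B x) x, real_inner_self_eq_norm_sq] at h
  rw [norm_sub_sq_real, norm_smul, real_inner_smul_right, Real.norm_eq_abs, mul_pow, sq_abs]
  linear_combination h + (a + b - 2 * rayQuot B x) * hμ

theorem inner_sub_smul_sub_smul_eq_zero_of_mem_span_pair (B : V →ₗ[ℝ] V) {a b : ℝ} {e₁ e₂ : V}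
    (he₁₂ : ⟪e₁, e₂⟫ = 0) (hBe₁ : B e₁ = a • e₁) (hBe₂ : B e₂ = b • e₂) {x : V}
    (hx : x ∈ Submodule.span ℝ {e₁, e₂}) : ⟪B x - a • x, B x - b • x⟫ = 0 := by
  obtain ⟨r, s, rfl⟩ := Submodule.mem_span_pair.mp hx
  have hBa : B (r • e₁ + s • e₂) - a • (r • e₁ + s • e₂) = ((b - a) * s) • e₂ := by
    rw [map_add, map_smul, map_smul, hBe₁, hBe₂]; module
  have hBb : B (r • e₁ + s • e₂) - b • (r • e₁ + s • e₂) = ((a - b) * r) • e₁ := by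
    rw [map_add, map_smul, map_smul, hBe₁, hBe₂]; module
  rw [hBa, hBb, real_inner_smul_left, real_inner_smul_right, real_inner_comm, he₁₂]
  ring

theorem span_pair_eq_top_of_inner_eq_zero (hdim : Module.finrank ℝ V = 2) {e₁ e₂ : V}
    (he₁ : e₁ ≠ 0) (he₂ : e₂ ≠ 0) (he₁₂ : ⟪e₁, e₂⟫ = 0) :
    Submodule.span ℝ {e₁, e₂} = ⊤ := by
  have hli : LinearIndependent ℝ ![e₁, e₂] := by
    refine (LinearIndependent.pair_iff' he₁).mpr fun c hc => he₂ ?_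
    have : c * ‖e₁‖ ^ 2 = 0 := by
      rw [← he₁₂, ← hc, real_inner_smul_right, real_inner_self_eq_norm_sq]
    simpa [hc.symm, he₁] using this
  rw [← Matrix.range_cons_cons_empty e₁ e₂ ![]]
  exact hli.span_eq_top_of_card_eq_finrank (by simp [hdim])

end

theorem residual_sq_eq_temple_general
    {V : Type*} [NormedAddCommGroup V] [InnerProductSpace ℝ V]
    (hdim : Module.finrank ℝ V = 2)
    (B : V →ₗ[ℝ] V)
    (a b : ℝ)
    (e₁ e₂ : V) (he₁ : ‖e₁‖ = 1) (he₂ : ‖e₂‖ = 1) (he₁₂ : ⟪e₁, e₂⟫ = 0)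
    (hBe₁ : B e₁ = a • e₁) (hBe₂ : B e₂ = b • e₂)
    (x : V) (hx : x ≠ 0) :
    ‖B x - rayQuot B x • x‖ ^ 2 / ‖x‖ ^ 2 = (a - rayQuot B x) * (rayQuot B x - b) ∧
      resQuot B x ^ 2 = (a - rayQuot B x) * (rayQuot B x - b) := by
  have hspan := span_pair_eq_top_of_inner_eq_zero hdim (norm_ne_zero_iff.mp (by simp [he₁]))
    (norm_ne_zero_iff.mp (by simp [he₂])) he₁₂
  have horth := inner_sub_smul_sub_smul_eq_zero_of_mem_span_pair B he₁₂ hBe₁ hBe₂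
    (hspan ▸ Submodule.mem_top : x ∈ Submodule.span ℝ {e₁, e₂})
  have hres : ‖B x - rayQuot B x • x‖ ^ 2 / ‖x‖ ^ 2 = (a - rayQuot B x) * (rayQuot B x - b) := by
    rw [norm_sub_rayQuot_smul_sq_of_inner_eq_zero B horth, mul_div_cancel_right₀]
    positivity
  exact ⟨hres, by rw [resQuot, div_pow, hres]⟩

/-- Lemma `lem:temple` (Temple-type identity): on a two-dimensional space, the squared
normalized residual equals `(a − μ(x))(μ(x) − b)` where `a ≥ b` are the eigenvalues. -/
theorem residual_sq_eq_temple
    {V : Type*} [NormedAddCommGroup V] [InnerProductSpace ℝ V] [FiniteDimensional ℝ V]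
    (hdim : Module.finrank ℝ V = 2)
    (B : V →ₗ[ℝ] V) (hB : LinearMap.IsSymmetric B)
    (a b : ℝ) (hab : a ≥ b)
    (e₁ e₂ : V) (he₁ : ‖e₁‖ = 1) (he₂ : ‖e₂‖ = 1) (he₁₂ : ⟪e₁, e₂⟫ = 0)
    (hBe₁ : B e₁ = a • e₁) (hBe₂ : B e₂ = b • e₂)
    (x : V) (hx : x ≠ 0) :
    ‖B x - rayQuot B x • x‖ ^ 2 / ‖x‖ ^ 2 = (a - rayQuot B x) * (rayQuot B x - b) ∧
      resQuot B x ^ 2 = (a - rayQuot B x) * (rayQuot B x - b) :=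
  residual_sq_eq_temple_general hdim B a b e₁ e₂ he₁ he₂ he₁₂ hBe₁ hBe₂ x hx
end

section
/- Let V be a two-dimensional real inner product space and B : V → V a self-adjoint linear operator with eigenvalues a > b. Let v, p ∈ V be nonzero, set κ = μ(v) and assume κ > b, and let β = ∠(v,p). Then μ(p) − b ≥ ( max{ √(κ − b)·cos β − √(a − κ)·sin β, 0 } )²; equivalently κ − μ(p) ≤ (κ − b) − ( max{ √(κ − b)·cos β − √(a − κ)·sin β, 0 } )². -/
/-!
In an orthonormal eigenbasis `e₁, e₂`, `μ(w) - b = (a - b) cos² ∠(e₁, w)` and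
`a - μ(w) = (a - b) sin² ∠(e₁, w)`. So with `α = ∠(e₁, v)`, replaced by `π - α = ∠(-e₁, v)` when
`cos α < 0`, the quantity inside the max is `√(a - b) cos (α + β)`, and the triangle inequality for
angles bounds `cos (α + β)` by `|cos ∠(e₁, p)| = √((μ(p) - b) / (a - b))`.
-/

open InnerProductGeometry Real RealInnerProductSpace

namespace InnerProductGeometry

variable {V : Type*} [NormedAddCommGroup V] [InnerProductSpace ℝ V]

theorem cos_angle_add_angle_le_cos_angle (u v p : V) :
    cos (angle u v + angle v p) ≤ cos (angle u p) := by
  rcases le_or_gt (angle u v + angle v p) π with hle | hgt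
  · exact cos_le_cos_of_nonneg_of_le_pi (angle_nonneg u p) hle (angle_le_angle_add_angle u v p)
  · -- reflect the triangle inequality through `-u` and `-p`
    have htri : angle u p ≤ 2 * π - (angle u v + angle v p) := by
      have := angle_le_angle_add_angle (-u) v (-p)
      rw [angle_neg_neg, angle_neg_left, angle_neg_right] at this
      linarith
    rw [← cos_two_pi_sub]
    exact cos_le_cos_of_nonneg_of_le_pi (angle_nonneg u p) (by linarith) htri

theorem abs_cos_angle_mul_cos_angle_sub_sin_angle_mul_sin_angle_le (u v p : V) :
    |cos (angle u v)| * cos (angle v p) - sin (angle u v) * sin (angle v p) ≤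
      |cos (angle u p)| := by
  rcases le_or_gt 0 (cos (angle u v)) with hcos | hcos
  · rw [abs_of_nonneg hcos, ← cos_add]
    exact (cos_angle_add_angle_le_cos_angle u v p).trans (le_abs_self _)
  · have h := cos_angle_add_angle_le_cos_angle (-u) v p
    rw [angle_neg_left, angle_neg_left, cos_add, cos_pi_sub, sin_pi_sub, cos_pi_sub] at h
    rw [abs_of_neg hcos]
    exact h.trans (neg_le_abs _)

end InnerProductGeometry

section

variable {V : Type*} [NormedAddCommGroup V] [InnerProductSpace ℝ V]

theorem eq_inner_smul_add_inner_smul_of_finrank_eq_two (hdim : Module.finrank ℝ V = 2)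
    {e₁ e₂ : V} (he : Orthonormal ℝ ![e₁, e₂]) (x : V) :
    x = ⟪e₁, x⟫ • e₁ + ⟪e₂, x⟫ • e₂ := by
  let b := OrthonormalBasis.mk he
    (he.linearIndependent.span_eq_top_of_card_eq_finrank (by simp [hdim])).ge
  simpa [b, Fin.sum_univ_two] using (b.sum_repr' x).symm

theorem rayQuot_sub_eq_mul_cos_sq (hdim : Module.finrank ℝ V = 2) {e₁ e₂ : V}
    (he : Orthonormal ℝ ![e₁, e₂]) {B : V →ₗ[ℝ] V} {a b : ℝ}
    (hBe₁ : B e₁ = a • e₁) (hBe₂ : B e₂ = b • e₂) {w : V} (hw : w ≠ 0) :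
    rayQuot B w - b = (a - b) * cos (angle e₁ w) ^ 2 := by
  obtain ⟨he₁, he₁₂, he₂⟩ : ‖e₁‖ = 1 ∧ ⟪e₁, e₂⟫ = 0 ∧ ‖e₂‖ = 1 := by simpa using he
  have hexp := eq_inner_smul_add_inner_smul_of_finrank_eq_two hdim he w
  set c := ⟪e₁, w⟫
  set d := ⟪e₂, w⟫
  have hinner : ∀ x : V, ⟪x, w⟫ = c * ⟪x, e₁⟫ + d * ⟪x, e₂⟫ := fun x => by
    conv_lhs => rw [hexp]
    simp [inner_add_right, real_inner_smul_right]
  have hnorm : ‖w‖ ^ 2 = c ^ 2 + d ^ 2 := by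
    rw [← real_inner_self_eq_norm_sq, hinner, real_inner_comm e₁ w, real_inner_comm e₂ w]
    ring
  have hBw : ⟪B w, w⟫ = a * c ^ 2 + b * d ^ 2 := by
    rw [hinner, hexp]
    simp only [map_add, map_smul, hBe₁, hBe₂, inner_add_left, real_inner_smul_left,
      real_inner_self_eq_norm_sq, he₁, he₂, he₁₂, real_inner_comm e₁ e₂]
    ring
  have hcd : 0 < c ^ 2 + d ^ 2 := hnorm ▸ by positivity
  rw [rayQuot, hBw, real_inner_self_eq_norm_sq, cos_angle, he₁, one_mul, div_pow, hnorm]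
  field_simp
  ring

theorem sub_rayQuot_eq_mul_sin_sq (hdim : Module.finrank ℝ V = 2) {e₁ e₂ : V}
    (he : Orthonormal ℝ ![e₁, e₂]) {B : V →ₗ[ℝ] V} {a b : ℝ}
    (hBe₁ : B e₁ = a • e₁) (hBe₂ : B e₂ = b • e₂) {w : V} (hw : w ≠ 0) :
    a - rayQuot B w = (a - b) * sin (angle e₁ w) ^ 2 := by
  have := rayQuot_sub_eq_mul_cos_sq hdim he hBe₁ hBe₂ hw
  rw [sin_sq]
  linarith

end

theorem rayleigh_two_dim_angle_bound_general
    {V : Type*} [NormedAddCommGroup V] [InnerProductSpace ℝ V]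
    (hdim : Module.finrank ℝ V = 2)
    (B : V →ₗ[ℝ] V)
    (a b : ℝ) (hab : a > b)
    (e₁ e₂ : V) (he₁ : ‖e₁‖ = 1) (he₂ : ‖e₂‖ = 1) (he₁₂ : ⟪e₁, e₂⟫ = 0)
    (hBe₁ : B e₁ = a • e₁) (hBe₂ : B e₂ = b • e₂)
    (v p : V) (hv : v ≠ 0) (hp : p ≠ 0) :
    rayQuot B p - b ≥
      (max (Real.sqrt (rayQuot B v - b) * Real.cos (InnerProductGeometry.angle v p) -
        Real.sqrt (a - rayQuot B v) * Real.sin (InnerProductGeometry.angle v p)) 0) ^ 2 ∧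
    rayQuot B v - rayQuot B p ≤
      (rayQuot B v - b) -
        (max (Real.sqrt (rayQuot B v - b) * Real.cos (InnerProductGeometry.angle v p) -
          Real.sqrt (a - rayQuot B v) * Real.sin (InnerProductGeometry.angle v p)) 0) ^ 2 := by
  have he : Orthonormal ℝ ![e₁, e₂] := by simp [he₁, he₂, he₁₂]
  have hab' : 0 ≤ a - b := by linarith
  have hsqrt_cos : √(rayQuot B v - b) = √(a - b) * |cos (angle e₁ v)| := by
    rw [rayQuot_sub_eq_mul_cos_sq hdim he hBe₁ hBe₂ hv, sqrt_mul hab', sqrt_sq_eq_abs]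
  have hsqrt_sin : √(a - rayQuot B v) = √(a - b) * sin (angle e₁ v) := by
    rw [sub_rayQuot_eq_mul_sin_sq hdim he hBe₁ hBe₂ hv, sqrt_mul hab',
      sqrt_sq (sin_angle_nonneg e₁ v)]
  have hp_eq : rayQuot B p - b = (√(a - b) * |cos (angle e₁ p)|) ^ 2 := by
    rw [rayQuot_sub_eq_mul_cos_sq hdim he hBe₁ hBe₂ hp, mul_pow, sq_sqrt hab', sq_abs]
  have hbound : √(rayQuot B v - b) * cos (angle v p) - √(a - rayQuot B v) * sin (angle v p) ≤
      √(a - b) * |cos (angle e₁ p)| := by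
    rw [hsqrt_cos, hsqrt_sin, mul_assoc, mul_assoc, ← mul_sub]
    exact mul_le_mul_of_nonneg_left
      (abs_cos_angle_mul_cos_angle_sub_sin_angle_mul_sin_angle_le e₁ v p) (sqrt_nonneg _)
  have hmax := pow_le_pow_left₀ (le_max_right _ _) (max_le hbound (by positivity)) 2
  constructor <;> linarith

/-- Lemma `prop:X`: on a two-dimensional space with eigenvalues `a > b`, the Rayleigh
quotient of `p` is bounded below in terms of `κ = μ(v)` and the angle `β = ∠(v,p)`. -/
theorem rayleigh_two_dim_angle_bound
    {V : Type*} [NormedAddCommGroup V] [InnerProductSpace ℝ V] [FiniteDimensional ℝ V]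
    (hdim : Module.finrank ℝ V = 2)
    (B : V →ₗ[ℝ] V) (hB : LinearMap.IsSymmetric B)
    (a b : ℝ) (hab : a > b)
    (e₁ e₂ : V) (he₁ : ‖e₁‖ = 1) (he₂ : ‖e₂‖ = 1) (he₁₂ : ⟪e₁, e₂⟫ = 0)
    (hBe₁ : B e₁ = a • e₁) (hBe₂ : B e₂ = b • e₂)
    (v p : V) (hv : v ≠ 0) (hp : p ≠ 0)
    (hκ : rayQuot B v > b) :
    rayQuot B p - b ≥
      (max (Real.sqrt (rayQuot B v - b) * Real.cos (InnerProductGeometry.angle v p) -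
        Real.sqrt (a - rayQuot B v) * Real.sin (InnerProductGeometry.angle v p)) 0) ^ 2 ∧
    rayQuot B v - rayQuot B p ≤
      (rayQuot B v - b) -
        (max (Real.sqrt (rayQuot B v - b) * Real.cos (InnerProductGeometry.angle v p) -
          Real.sqrt (a - rayQuot B v) * Real.sin (InnerProductGeometry.angle v p)) 0) ^ 2 :=
  rayleigh_two_dim_angle_bound_general hdim B a b hab e₁ e₂ he₁ he₂ he₁₂ hBe₁ hBe₂ v p hv hp
end

section
/- Define f(s,t,α) = s − s·(cos α − (t/s)·sin α)² for s > 0, t ≥ 0, α ≥ 0, and α*(s,t) = arctan(s/t) for t > 0 and α*(s,t) = π/2 for t = 0 (so that cot α*(s,t) = t/s). Define g : ℝ_{>0} × ℝ_{≥0} × ℝ_{≥0} → ℝ_{≥0} by g(s,t,α) = f(s,t,α) if α < α*(s,t) and g(s,t,α) = s otherwise. Then g is continuous, and g is monotonically non-decreasing in each of its three variables (with the other two variables held fixed). -/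
/-!
Put `u(s,t,α) = s cos α - t sin α`, so that `f = s - u²/s`, and note that
`α*(s,t) = π/2 - arctan (t/s)` is exactly the zero of `u` in `[0, π/2]`. So `f = s` at `α*`,
whence `g(s,t,α) = f(s,t, min α α*)`, which is continuous because `α*` is. On `[0, α*]` the
quantity `u` is nonnegative and decreasing in `α` and in `t`, so `f` increases in `α` and `t`
there; `f` increases in `s` for every `α`, while `α*` increases in `s` and decreases in `t`.
Nonnegativity follows from monotonicity in `α` and `g(s,t,0) = 0`.
-/

open Real

/-- `f(s,t,α) = s − s(cos α − (t/s) sin α)²`. -/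
noncomputable def fAux (s t α : ℝ) : ℝ :=
  s - s * (Real.cos α - t / s * Real.sin α) ^ 2

/-- The critical angle `α*(s,t)` with `cot α*(s,t) = t/s`, i.e. `arctan(s/t)` for `t > 0`
and `π/2` for `t = 0`. -/
noncomputable def alphaStar (s t : ℝ) : ℝ :=
  if t = 0 then Real.pi / 2 else Real.arctan (s / t)

/-- `g(s,t,α) = f(s,t,α)` for `α < α*(s,t)` and `g(s,t,α) = s` otherwise. -/
noncomputable def gAux (s t α : ℝ) : ℝ :=
  if α < alphaStar s t then fAux s t α else s

open Set

lemma alphaStar_eq {s t : ℝ} (hs : 0 < s) (ht : 0 ≤ t) :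
    alphaStar s t = π / 2 - arctan (t / s) := by
  unfold alphaStar
  split_ifs with h
  · simp [h]
  · rw [← inv_div, arctan_inv_of_pos (div_pos (lt_of_le_of_ne ht (Ne.symm h)) hs)]

lemma alphaStar_pos {s t : ℝ} (hs : 0 < s) (ht : 0 ≤ t) : 0 < alphaStar s t := by
  rw [alphaStar_eq hs ht]
  linarith [arctan_lt_pi_div_two (t / s)]

lemma alphaStar_le_pi_div_two {s t : ℝ} (hs : 0 < s) (ht : 0 ≤ t) : alphaStar s t ≤ π / 2 := by
  rw [alphaStar_eq hs ht]
  linarith [arctan_nonneg.mpr (div_nonneg ht hs.le)]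

lemma alphaStar_monotoneOn_left {t : ℝ} (ht : 0 ≤ t) : MonotoneOn (alphaStar · t) (Ioi 0) := by
  intro s₁ hs₁ s₂ hs₂ h
  simp only [alphaStar_eq hs₁ ht, alphaStar_eq hs₂ ht]
  gcongr

lemma alphaStar_antitoneOn_right {s : ℝ} (hs : 0 < s) : AntitoneOn (alphaStar s) (Ici 0) := by
  intro t₁ ht₁ t₂ ht₂ h
  simp only [alphaStar_eq hs ht₁, alphaStar_eq hs ht₂]
  gcongr

noncomputable def uAux (s t α : ℝ) : ℝ :=
  s * cos α - t * sin α

lemma fAux_eq_sub_uAux_sq_div {s t α : ℝ} (hs : s ≠ 0) :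
    fAux s t α = s - uAux s t α ^ 2 / s := by
  unfold fAux uAux
  field_simp

lemma uAux_alphaStar {s t : ℝ} (hs : 0 < s) (ht : 0 ≤ t) : uAux s t (alphaStar s t) = 0 := by
  rw [uAux, alphaStar_eq hs ht, cos_pi_div_two_sub, sin_pi_div_two_sub, sin_arctan, cos_arctan]
  field_simp
  ring

lemma uAux_antitoneOn {s t : ℝ} (hs : 0 ≤ s) (ht : 0 ≤ t) :
    AntitoneOn (uAux s t) (Icc 0 (π / 2)) := by
  intro α₁ hα₁ α₂ hα₂ h
  have hcos : cos α₂ ≤ cos α₁ :=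
    cos_le_cos_of_nonneg_of_le_pi hα₁.1 (by linarith [hα₂.2, pi_pos]) h
  have hsin : sin α₁ ≤ sin α₂ :=
    sin_le_sin_of_le_of_le_pi_div_two (by linarith [hα₁.1, pi_pos]) hα₂.2 h
  unfold uAux
  nlinarith [mul_le_mul_of_nonneg_left hcos hs, mul_le_mul_of_nonneg_left hsin ht]

lemma uAux_nonneg {s t α : ℝ} (hs : 0 < s) (ht : 0 ≤ t) (hα : α ∈ Icc 0 (alphaStar s t)) :
    0 ≤ uAux s t α := by
  have hstar := alphaStar_le_pi_div_two hs ht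
  rw [← uAux_alphaStar hs ht]
  exact uAux_antitoneOn hs.le ht ⟨hα.1, hα.2.trans hstar⟩
    ⟨(alphaStar_pos hs ht).le, hstar⟩ hα.2

lemma fAux_alphaStar {s t : ℝ} (hs : 0 < s) (ht : 0 ≤ t) : fAux s t (alphaStar s t) = s := by
  simp [fAux_eq_sub_uAux_sq_div hs.ne', uAux_alphaStar hs ht]

lemma fAux_le_self {s t α : ℝ} (hs : 0 ≤ s) : fAux s t α ≤ s := by
  unfold fAux
  nlinarith [mul_nonneg hs (sq_nonneg (cos α - t / s * sin α))]

lemma fAux_monotoneOn_left (t α : ℝ) : MonotoneOn (fAux · t α) (Ioi 0) := by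
  intro s₁ (hs₁ : 0 < s₁) s₂ (hs₂ : 0 < s₂) h
  -- every term of this expansion is nondecreasing in `s > 0`
  have hf : ∀ s, s ≠ 0 →
      fAux s t α = s * sin α ^ 2 + 2 * t * sin α * cos α - t ^ 2 * sin α ^ 2 / s := by
    intro s hs
    unfold fAux
    field_simp
    linear_combination (-(s ^ 2)) * sin_sq_add_cos_sq α
  simp only [hf s₁ hs₁.ne', hf s₂ hs₂.ne']
  gcongr

lemma fAux_monotoneOn_alpha {s t : ℝ} (hs : 0 < s) (ht : 0 ≤ t) :
    MonotoneOn (fAux s t) (Icc 0 (alphaStar s t)) := by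
  intro α₁ hα₁ α₂ hα₂ h
  have hstar := alphaStar_le_pi_div_two hs ht
  have hu : uAux s t α₂ ≤ uAux s t α₁ :=
    uAux_antitoneOn hs.le ht ⟨hα₁.1, hα₁.2.trans hstar⟩ ⟨hα₂.1, hα₂.2.trans hstar⟩ h
  rw [fAux_eq_sub_uAux_sq_div hs.ne', fAux_eq_sub_uAux_sq_div hs.ne']
  gcongr
  exact uAux_nonneg hs ht hα₂

lemma fAux_le_fAux_of_le_right {s t₁ t₂ α : ℝ} (hs : 0 < s) (ht₁ : 0 ≤ t₁) (h : t₁ ≤ t₂)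
    (hα : α ∈ Icc 0 (alphaStar s t₂)) : fAux s t₁ α ≤ fAux s t₂ α := by
  have hsin : 0 ≤ sin α := sin_nonneg_of_nonneg_of_le_pi hα.1
    (by linarith [hα.2.trans (alphaStar_le_pi_div_two hs (ht₁.trans h)), pi_pos])
  have hu : uAux s t₂ α ≤ uAux s t₁ α := by
    unfold uAux
    nlinarith [mul_le_mul_of_nonneg_right h hsin]
  rw [fAux_eq_sub_uAux_sq_div hs.ne', fAux_eq_sub_uAux_sq_div hs.ne']
  gcongr
  exact uAux_nonneg hs (ht₁.trans h) hα

lemma gAux_eq_fAux_min {s t α : ℝ} (hs : 0 < s) (ht : 0 ≤ t) :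
    gAux s t α = fAux s t (min α (alphaStar s t)) := by
  unfold gAux
  split_ifs with h
  · rw [min_eq_left h.le]
  · rw [min_eq_right (not_lt.mp h), fAux_alphaStar hs ht]

lemma gAux_le_self {s t α : ℝ} (hs : 0 ≤ s) : gAux s t α ≤ s := by
  unfold gAux
  split_ifs
  exacts [fAux_le_self hs, le_rfl]

lemma gAux_zero {s t : ℝ} (hs : 0 < s) (ht : 0 ≤ t) : gAux s t 0 = 0 := by
  simp [gAux, alphaStar_pos hs ht, fAux]

theorem continuousOn_gAux :
    ContinuousOn (fun q : ℝ × ℝ × ℝ => gAux q.1 q.2.1 q.2.2) {q | 0 < q.1 ∧ 0 ≤ q.2.1} := by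
  have hne : ∀ q ∈ {q : ℝ × ℝ × ℝ | 0 < q.1 ∧ 0 ≤ q.2.1}, q.1 ≠ 0 := fun q hq => hq.1.ne'
  refine ContinuousOn.congr (f := fun q =>
    fAux q.1 q.2.1 (min q.2.2 (π / 2 - arctan (q.2.1 / q.1)))) ?_ ?_
  · unfold fAux
    fun_prop (disch := exact hne)
  · rintro ⟨s, t, α⟩ ⟨hs, ht⟩
    dsimp only
    rw [gAux_eq_fAux_min hs ht, alphaStar_eq hs ht]

lemma min_alphaStar_mem_Icc {s t α : ℝ} (hs : 0 < s) (ht : 0 ≤ t) (hα : 0 ≤ α) :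
    min α (alphaStar s t) ∈ Icc 0 (alphaStar s t) :=
  ⟨le_min hα (alphaStar_pos hs ht).le, min_le_right _ _⟩

theorem gAux_monotoneOn_alpha {s t : ℝ} (hs : 0 < s) (ht : 0 ≤ t) :
    MonotoneOn (gAux s t) (Ici 0) := by
  intro α₁ hα₁ α₂ hα₂ h
  simp only [gAux_eq_fAux_min hs ht]
  exact fAux_monotoneOn_alpha hs ht (min_alphaStar_mem_Icc hs ht hα₁)
    (min_alphaStar_mem_Icc hs ht hα₂) (min_le_min_right _ h)

theorem gAux_monotoneOn_left {t α : ℝ} (ht : 0 ≤ t) (hα : 0 ≤ α) :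
    MonotoneOn (gAux · t α) (Ioi 0) := by
  intro s₁ (hs₁ : 0 < s₁) s₂ (hs₂ : 0 < s₂) h
  have hstar := alphaStar_monotoneOn_left ht hs₁ hs₂ h
  have hmem := min_alphaStar_mem_Icc hs₁ ht hα
  simp only [gAux_eq_fAux_min hs₁ ht, gAux_eq_fAux_min hs₂ ht]
  calc fAux s₁ t (min α (alphaStar s₁ t))
      ≤ fAux s₂ t (min α (alphaStar s₁ t)) := fAux_monotoneOn_left t _ hs₁ hs₂ h
    _ ≤ fAux s₂ t (min α (alphaStar s₂ t)) :=
      fAux_monotoneOn_alpha hs₂ ht ⟨hmem.1, hmem.2.trans hstar⟩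
        (min_alphaStar_mem_Icc hs₂ ht hα) (min_le_min_left _ hstar)

theorem gAux_monotoneOn_right {s α : ℝ} (hs : 0 < s) (hα : 0 ≤ α) :
    MonotoneOn (gAux s · α) (Ici 0) := by
  intro t₁ (ht₁ : 0 ≤ t₁) t₂ (ht₂ : 0 ≤ t₂) h
  dsimp only
  by_cases h₂ : α < alphaStar s t₂
  · have h₁ : α < alphaStar s t₁ := h₂.trans_le (alphaStar_antitoneOn_right hs ht₁ ht₂ h)
    simp only [gAux, if_pos h₁, if_pos h₂]
    exact fAux_le_fAux_of_le_right hs ht₁ h ⟨hα, h₂.le⟩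
  · rw [show gAux s t₂ α = s from if_neg h₂]
    exact gAux_le_self hs.le

/-- Lemma `lem:gfun`: the function `g` is nonnegative, continuous on
`ℝ_{>0} × ℝ_{≥0} × ℝ_{≥0}`, and monotonically non-decreasing in each of its variables. -/
theorem gAux_continuous_and_monotone :
    ContinuousOn (fun q : ℝ × ℝ × ℝ => gAux q.1 q.2.1 q.2.2)
      {q : ℝ × ℝ × ℝ | 0 < q.1 ∧ 0 ≤ q.2.1 ∧ 0 ≤ q.2.2} ∧
    (∀ s t α : ℝ, 0 < s → 0 ≤ t → 0 ≤ α → 0 ≤ gAux s t α) ∧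
    (∀ s₁ s₂ t α : ℝ, 0 < s₁ → s₁ ≤ s₂ → 0 ≤ t → 0 ≤ α →
      gAux s₁ t α ≤ gAux s₂ t α) ∧
    (∀ s t₁ t₂ α : ℝ, 0 < s → 0 ≤ t₁ → t₁ ≤ t₂ → 0 ≤ α →
      gAux s t₁ α ≤ gAux s t₂ α) ∧
    (∀ s t α₁ α₂ : ℝ, 0 < s → 0 ≤ t → 0 ≤ α₁ → α₁ ≤ α₂ →
      gAux s t α₁ ≤ gAux s t α₂) := by
  refine ⟨continuousOn_gAux.mono fun q hq => ⟨hq.1, hq.2.1⟩, ?_,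
    fun _ _ _ _ hs₁ h ht hα => gAux_monotoneOn_left ht hα hs₁ (hs₁.trans_le h) h,
    fun _ _ _ _ hs ht₁ h hα => gAux_monotoneOn_right hs hα ht₁ (ht₁.trans h) h, ?_⟩
  · intro s t α hs ht hα
    rw [← gAux_zero hs ht]
    exact gAux_monotoneOn_alpha hs ht self_mem_Ici hα hα
  · intro s t α₁ α₂ hs ht hα₁ h
    exact gAux_monotoneOn_alpha hs ht hα₁ (hα₁.trans h) h
end

section
/- Assume μ₁ > 0, let γ ∈ [0,1) be such that γ·μ₁ ≥ μ₂, and let x ∈ V be nonzero. Then sin² ∠(v₁,x) ≤ (1 − μ(x)/μ₁)/(1 − γ). In particular, if μ(x) ≥ q·μ₁ for some q ∈ [0,1], then sin² ∠(v₁,x) ≤ (1 − q)/(1 − γ). -/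
open InnerProductGeometry Real RealInnerProductSpace

lemma key_bound {V : Type*} [NormedAddCommGroup V] [InnerProductSpace ℝ V]
    [FiniteDimensional ℝ V]
    (B : V →ₗ[ℝ] V) (hB : LinearMap.IsSymmetric B)
    (μ₁ μ₂ : ℝ) (v₁ : V) (hBv₁ : B v₁ = μ₁ • v₁)
    (hsimple : ∀ w : V, B w = μ₁ • w → ∃ c : ℝ, w = c • v₁)
    (hμ₂max : ∀ μ : ℝ, (∃ w : V, w ≠ 0 ∧ ⟪w, v₁⟫ = 0 ∧ B w = μ • w) → μ ≤ μ₂)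
    (w : V) (hw : ⟪w, v₁⟫ = 0) : ⟪B w, w⟫ ≤ μ₂ * ‖w‖ ^ 2 := by
  have hrank : Module.finrank ℝ V = Module.finrank ℝ V := rfl
  set bb := hB.eigenvectorBasis hrank with hbb
  set lam := hB.eigenvalues hrank with hlam
  have heig : ∀ i, B (bb i) = lam i • bb i := fun i => hB.apply_eigenvectorBasis hrank i
  have hterm : ∀ i, lam i * (⟪w, bb i⟫ * ⟪bb i, w⟫) ≤ μ₂ * (⟪w, bb i⟫ * ⟪bb i, w⟫) := by
    intro i
    by_cases h : lam i = μ₁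
    · obtain ⟨c, hc⟩ := hsimple (bb i) (by rw [heig i, h])
      have : ⟪w, bb i⟫ = 0 := by rw [hc, real_inner_smul_right, hw, mul_zero]
      rw [this]; simp
    · have hbne : bb i ≠ 0 := by simpa using bb.toBasis.ne_zero i
      have horth : ⟪bb i, v₁⟫ = 0 := by
        have h1 : ⟪B (bb i), v₁⟫ = lam i * ⟪bb i, v₁⟫ := by
          rw [heig i, real_inner_smul_left]
        have h2 : ⟪B (bb i), v₁⟫ = μ₁ * ⟪bb i, v₁⟫ := by
          rw [hB (bb i) v₁, hBv₁, real_inner_smul_right]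
        have := h1.symm.trans h2
        rcases mul_eq_mul_right_iff.mp this with h' | h'
        · exact absurd h' h
        · exact h'
      have := hμ₂max (lam i) ⟨bb i, hbne, horth, heig i⟩
      have hsq : 0 ≤ ⟪w, bb i⟫ * ⟪bb i, w⟫ := by
        rw [real_inner_comm (bb i) w]; exact mul_self_nonneg _
      nlinarith
  have h1 : ⟪B w, w⟫ = ∑ i, lam i * (⟪w, bb i⟫ * ⟪bb i, w⟫) := by
    rw [← bb.sum_inner_mul_inner (B w) w]
    refine Finset.sum_congr rfl fun i _ => ?_
    rw [hB w (bb i), heig i, real_inner_smul_right]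
    ring
  have h2 : ‖w‖ ^ 2 = ∑ i, ⟪w, bb i⟫ * ⟪bb i, w⟫ := by
    rw [bb.sum_inner_mul_inner w w, real_inner_self_eq_norm_sq]
  rw [h1, h2, Finset.mul_sum]
  exact Finset.sum_le_sum fun i _ => hterm i

/-- Lemma `sinbound`: angle bound for the largest eigenvector in terms of the Rayleigh
quotient. -/
theorem sin_sq_angle_largest_eigenvector_bound
    {V : Type*} [NormedAddCommGroup V] [InnerProductSpace ℝ V] [FiniteDimensional ℝ V]
    (B : V →ₗ[ℝ] V) (hB : LinearMap.IsSymmetric B)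
    (μ₁ μ₂ : ℝ) (v₁ : V) (hv₁norm : ‖v₁‖ = 1) (hBv₁ : B v₁ = μ₁ • v₁)
    (hμ₁max : ∀ μ : ℝ, (∃ w : V, w ≠ 0 ∧ B w = μ • w) → μ ≤ μ₁)
    (hsimple : ∀ w : V, B w = μ₁ • w → ∃ c : ℝ, w = c • v₁)
    (hμ₂ex : ∃ w : V, w ≠ 0 ∧ ⟪w, v₁⟫ = 0 ∧ B w = μ₂ • w)
    (hμ₂max : ∀ μ : ℝ, (∃ w : V, w ≠ 0 ∧ ⟪w, v₁⟫ = 0 ∧ B w = μ • w) → μ ≤ μ₂)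
    (hμ₁pos : 0 < μ₁)
    (γ : ℝ) (hγ : γ ∈ Set.Ico (0:ℝ) 1) (hγμ : γ * μ₁ ≥ μ₂)
    (x : V) (hx : x ≠ 0) :
    Real.sin (InnerProductGeometry.angle v₁ x) ^ 2 ≤
        (1 - rayQuot B x / μ₁) / (1 - γ) ∧
      ∀ q : ℝ, q ∈ Set.Icc (0:ℝ) 1 → rayQuot B x ≥ q * μ₁ →
        Real.sin (InnerProductGeometry.angle v₁ x) ^ 2 ≤ (1 - q) / (1 - γ) := by
  obtain ⟨hγ0, hγ1⟩ := hγ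
  have hγpos : 0 < 1 - γ := by linarith
  set c : ℝ := ⟪x, v₁⟫ with hc
  set w : V := x - c • v₁ with hwdef
  have hv₁inner : ⟪v₁, v₁⟫ = (1:ℝ) := by
    rw [real_inner_self_eq_norm_sq, hv₁norm]; norm_num
  have hw : ⟪w, v₁⟫ = 0 := by
    rw [hwdef, inner_sub_left, real_inner_smul_left, hv₁inner]; ring
  have hwv : ⟪v₁, w⟫ = 0 := by rw [real_inner_comm]; exact hw
  have hxdec : x = c • v₁ + w := by rw [hwdef]; abel
  -- norm decomposition
  have hNdec : ‖x‖ ^ 2 = c ^ 2 + ‖w‖ ^ 2 := by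
    have : ⟪c • v₁, w⟫ = 0 := by rw [real_inner_smul_left, hwv, mul_zero]
    rw [hxdec, norm_add_sq_real, this, norm_smul, norm_eq_abs, hv₁norm]
    ring_nf
    rw [sq_abs]
    ring
  -- quadratic form decomposition
  have hBdec : ⟪B x, x⟫ = μ₁ * c ^ 2 + ⟪B w, w⟫ := by
    have h1 : ⟪B w, v₁⟫ = 0 := by
      rw [hB w v₁, hBv₁, real_inner_smul_right, hw, mul_zero]
    rw [hxdec, map_add, map_smul, hBv₁]
    simp only [inner_add_left, inner_add_right, real_inner_smul_left, real_inner_smul_right,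
      hv₁inner, hwv, h1]
    ring
  have hkey : ⟪B w, w⟫ ≤ μ₂ * ‖w‖ ^ 2 :=
    key_bound B hB μ₁ μ₂ v₁ hBv₁ hsimple hμ₂max w hw
  have hwsq : (0:ℝ) ≤ ‖w‖ ^ 2 := sq_nonneg _
  have hkey2 : ⟪B w, w⟫ ≤ γ * μ₁ * ‖w‖ ^ 2 := by nlinarith
  have hxn : ‖x‖ ≠ 0 := norm_ne_zero_iff.mpr hx
  have hN : (0:ℝ) < ‖x‖ ^ 2 := by positivity
  -- Rayleigh quotient
  have hray : rayQuot B x * ‖x‖ ^ 2 = ⟪B x, x⟫ := by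
    rw [rayQuot, real_inner_self_eq_norm_sq, div_mul_cancel₀]
    exact ne_of_gt hN
  -- sin squared
  have hsin : Real.sin (InnerProductGeometry.angle v₁ x) ^ 2 = ‖w‖ ^ 2 / ‖x‖ ^ 2 := by
    have hcos := InnerProductGeometry.cos_angle v₁ x
    rw [Real.sin_sq, hcos, hv₁norm, one_mul, real_inner_comm, ← hc, div_pow]
    rw [eq_div_iff (ne_of_gt hN)]
    field_simp
    nlinarith [hNdec]
  set R := rayQuot B x with hR
  have hRμ : R / μ₁ * μ₁ = R := div_mul_cancel₀ R (ne_of_gt hμ₁pos)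
  have hmain : Real.sin (InnerProductGeometry.angle v₁ x) ^ 2 ≤ (1 - R / μ₁) / (1 - γ) := by
    rw [hsin, div_le_div_iff₀ hN hγpos]
    nlinarith [hray, hBdec, hkey2, hNdec, mul_pos hμ₁pos hN]
  refine ⟨hmain, fun q hq hqR => ?_⟩
  refine le_trans hmain ?_
  have : q ≤ R / μ₁ := (le_div_iff₀ hμ₁pos).mpr (by linarith [hqR])
  gcongr
end

section
/- Assume μ₁ > 0, let γ ∈ (0,1) be such that γ·μ₁ ≥ μ₂, and let x ∈ V be nonzero with μ(x) > 0. Set τ(x) = ϱ(x)/μ(x). If τ(x) ≤ (1 − γ)/(2√γ) and sin² ∠(v₁,x) ≤ 1/(1 + γ), then μ(x)/μ₁ ≥ ( γ + 1 + √( (γ − 1)² − 4γ·τ(x)² ) ) / ( 2·(τ(x)² + 1) ). -/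
set_option maxHeartbeats 1600000


open InnerProductGeometry Real RealInnerProductSpace

private 
lemma alg_key (γ g τ t : ℝ) (hg : 0 < g) (hgγ : g ^ 2 = γ) (hγ1 : γ < 1)
    (ht0 : 0 < t) (ht1 : t ≤ 1) (hτ0 : 0 ≤ τ)
    (hI : (1 - t) * (t - γ) ≤ τ ^ 2 * t ^ 2)
    (hII : g * (1 - t) ≤ τ * t)
    (hτ2 : 2 * g * τ ≤ 1 - γ) :
    (γ + 1 + Real.sqrt ((γ - 1) ^ 2 - 4 * γ * τ ^ 2)) / (2 * (τ ^ 2 + 1)) ≤ t := by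
  subst hgγ
  set d := Real.sqrt ((g ^ 2 - 1) ^ 2 - 4 * g ^ 2 * τ ^ 2) with hd
  have hD0 : (0:ℝ) ≤ (g ^ 2 - 1) ^ 2 - 4 * g ^ 2 * τ ^ 2 := by
    nlinarith [mul_nonneg (by linarith : (0:ℝ) ≤ 1 - g ^ 2 - 2 * g * τ)
      (by nlinarith [mul_nonneg hg.le hτ0] : (0:ℝ) ≤ 1 - g ^ 2 + 2 * g * τ)]
  have hd0 : 0 ≤ d := Real.sqrt_nonneg _
  have hd2 : d ^ 2 = (g ^ 2 - 1) ^ 2 - 4 * g ^ 2 * τ ^ 2 := Real.sq_sqrt hD0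
  rw [div_le_iff₀ (by positivity)]
  -- suffices : g^2 + 1 + d ≤ t * (2*(τ^2+1))
  by_contra hcon
  push_neg at hcon
  have hu : 2 * (τ ^ 2 + 1) * t - (1 + g ^ 2) < d := by nlinarith
  have hR : 0 ≤ (τ ^ 2 + 1) * t ^ 2 - (1 + g ^ 2) * t + g ^ 2 := by nlinarith
  have hu2 : d ^ 2 ≤ (2 * (τ ^ 2 + 1) * t - (1 + g ^ 2)) ^ 2 := by nlinarith
  have hun : 2 * (τ ^ 2 + 1) * t - (1 + g ^ 2) ≤ -d := by nlinarith
  have hu0 : 2 * (τ ^ 2 + 1) * t - (1 + g ^ 2) < 0 := by nlinarith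
  have hP : 0 ≤ t * (g + τ) - g := by nlinarith
  have hgτ : 0 < g + τ := by linarith
  have hM : (τ ^ 2 + 1) * (t * (g + τ) + g) - (1 + g ^ 2) * (g + τ) < 0 := by nlinarith
  have hPM : 0 ≤ (t * (g + τ) - g) * ((τ ^ 2 + 1) * (t * (g + τ) + g) - (1 + g ^ 2) * (g + τ)) := by
    have hid : (t * (g + τ) - g) * ((τ ^ 2 + 1) * (t * (g + τ) + g) - (1 + g ^ 2) * (g + τ))
        = ((τ ^ 2 + 1) * t ^ 2 - (1 + g ^ 2) * t + g ^ 2) * (g + τ) ^ 2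
          + g * τ * (1 - g ^ 2 - 2 * g * τ) := by ring
    rw [hid]
    have := mul_nonneg (mul_nonneg hg.le hτ0) (by linarith : (0:ℝ) ≤ 1 - g ^ 2 - 2 * g * τ)
    nlinarith [sq_nonneg (g + τ)]
  have hPle : t * (g + τ) - g ≤ 0 := by
    by_contra h
    push_neg at h
    exact absurd hPM (not_le.mpr (mul_neg_of_pos_of_neg h hM))
  have hP0 : t * (g + τ) - g = 0 := le_antisymm hPle hP
  have hrest : ((τ ^ 2 + 1) * t ^ 2 - (1 + g ^ 2) * t + g ^ 2) * (g + τ) ^ 2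
      + g * τ * (1 - g ^ 2 - 2 * g * τ) = 0 := by nlinarith
  have hτQ : τ * (1 - g ^ 2 - 2 * g * τ) = 0 := by nlinarith [sq_nonneg (g + τ), mul_nonneg hR (sq_nonneg (g + τ))]
  rcases mul_eq_zero.mp hτQ with hτ0' | hQ0
  · -- τ = 0 : t = 1, d = 1 - g^2
    have ht1' : t = 1 := by
      have : t * g = g := by nlinarith
      exact mul_right_cancel₀ hg.ne' (by linarith)
    have hdeq : d = 1 - g ^ 2 := by
      have : d ^ 2 = (1 - g ^ 2) ^ 2 := by rw [hd2, hτ0']; ring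
      nlinarith
    rw [ht1', hτ0', hdeq] at hu
    nlinarith
  · -- Q = 0 : d = 0, and u = 0, contradiction with hu0
    have hdeq : d = 0 := by
      have : d ^ 2 = 0 := by rw [hd2]; nlinarith
      nlinarith
    have : (2 * (τ ^ 2 + 1) * t - (1 + g ^ 2)) * (g + τ) = 0 := by nlinarith
    have := mul_eq_zero.mp this
    rcases this with h | h
    · linarith
    · linarith


private lemma spectral_bounds {V : Type*} [NormedAddCommGroup V] [InnerProductSpace ℝ V]
    [FiniteDimensional ℝ V]
    (B : V →ₗ[ℝ] V) (hB : LinearMap.IsSymmetric B)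
    (μ₁ μ₂ : ℝ) (v₁ : V) (hBv₁ : B v₁ = μ₁ • v₁)
    (hμ₁max : ∀ μ : ℝ, (∃ w : V, w ≠ 0 ∧ B w = μ • w) → μ ≤ μ₁)
    (hsimple : ∀ w : V, B w = μ₁ • w → ∃ c : ℝ, w = c • v₁)
    (hμ₂max : ∀ μ : ℝ, (∃ w : V, w ≠ 0 ∧ ⟪w, v₁⟫ = 0 ∧ B w = μ • w) → μ ≤ μ₂) :
    (∀ z : V, ⟪B z, z⟫ ≤ μ₁ * ‖z‖ ^ 2) ∧
      (∀ y : V, ⟪v₁, y⟫ = 0 → ⟪B y, y⟫ ≤ μ₂ * ‖y‖ ^ 2) := by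
  have hfr : Module.finrank ℝ V = Module.finrank ℝ V := rfl
  set b := hB.eigenvectorBasis hfr with hb
  set lam := hB.eigenvalues hfr with hlam
  have happ : ∀ i, B (b i) = lam i • b i := fun i => hB.apply_eigenvectorBasis hfr i
  have hne : ∀ i, b i ≠ 0 := fun i => b.toBasis.ne_zero i
  have hlam1 : ∀ i, lam i ≤ μ₁ := fun i => hμ₁max _ ⟨b i, hne i, happ i⟩
  -- expansion of the quadratic form
  have hexp : ∀ z : V, ⟪B z, z⟫ = ∑ i, lam i * ⟪b i, z⟫ ^ 2 := by
    intro z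
    rw [← b.sum_inner_mul_inner (B z) z]
    congr 1; funext i
    have : ⟪B z, b i⟫ = lam i * ⟪b i, z⟫ := by
      rw [hB z (b i), happ i, real_inner_smul_right, real_inner_comm]
    rw [this]; ring
  have hnorm : ∀ z : V, ‖z‖ ^ 2 = ∑ i, ⟪b i, z⟫ ^ 2 := by
    intro z
    rw [← real_inner_self_eq_norm_sq, ← b.sum_inner_mul_inner z z]
    congr 1; funext i
    rw [real_inner_comm z (b i)]; ring
  constructor
  · intro z
    rw [hexp z, hnorm z, Finset.mul_sum]
    apply Finset.sum_le_sum
    intro i _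
    exact mul_le_mul_of_nonneg_right (hlam1 i) (sq_nonneg _)
  · intro y hy
    have key : ∀ i, lam i * ⟪b i, y⟫ ^ 2 ≤ μ₂ * ⟪b i, y⟫ ^ 2 := by
      intro i
      by_cases hcase : lam i = μ₁
      · obtain ⟨c, hc⟩ := hsimple (b i) (by rw [happ i, hcase])
        have : ⟪b i, y⟫ = 0 := by
          rw [hc, real_inner_smul_left, hy, mul_zero]
        rw [this]; simp
      · have hperp : ⟪b i, v₁⟫ = 0 := by
          have h1 : ⟪B (b i), v₁⟫ = lam i * ⟪b i, v₁⟫ := by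
            rw [happ i, real_inner_smul_left]
          have h2 : ⟪B (b i), v₁⟫ = μ₁ * ⟪b i, v₁⟫ := by
            rw [hB (b i) v₁, hBv₁, real_inner_smul_right]
          have := h1.symm.trans h2
          rcases mul_eq_zero.mp (by linarith [this] : (lam i - μ₁) * ⟪b i, v₁⟫ = 0) with h | h
          · exact absurd (by linarith : lam i = μ₁) hcase
          · exact h
        have := hμ₂max (lam i) ⟨b i, hne i, hperp, happ i⟩
        exact mul_le_mul_of_nonneg_right this (sq_nonneg _)
    rw [hexp y, hnorm y, Finset.mul_sum]
    exact Finset.sum_le_sum fun i _ => key i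

/-- Lemma `qbound`: lower bound on the Rayleigh quotient relative to the largest
eigenvalue in terms of the normalized residual. -/
theorem rayleigh_lower_bound_from_residual
    {V : Type*} [NormedAddCommGroup V] [InnerProductSpace ℝ V] [FiniteDimensional ℝ V]
    (B : V →ₗ[ℝ] V) (hB : LinearMap.IsSymmetric B)
    (μ₁ μ₂ : ℝ) (v₁ : V) (hv₁norm : ‖v₁‖ = 1) (hBv₁ : B v₁ = μ₁ • v₁)
    (hμ₁max : ∀ μ : ℝ, (∃ w : V, w ≠ 0 ∧ B w = μ • w) → μ ≤ μ₁)
    (hsimple : ∀ w : V, B w = μ₁ • w → ∃ c : ℝ, w = c • v₁)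
    (hμ₂ex : ∃ w : V, w ≠ 0 ∧ ⟪w, v₁⟫ = 0 ∧ B w = μ₂ • w)
    (hμ₂max : ∀ μ : ℝ, (∃ w : V, w ≠ 0 ∧ ⟪w, v₁⟫ = 0 ∧ B w = μ • w) → μ ≤ μ₂)
    (hμ₁pos : 0 < μ₁)
    (γ : ℝ) (hγ : γ ∈ Set.Ioo (0:ℝ) 1) (hγμ : γ * μ₁ ≥ μ₂)
    (x : V) (hx : x ≠ 0) (hμx : 0 < rayQuot B x)
    (hτ : resQuot B x / rayQuot B x ≤ (1 - γ) / (2 * Real.sqrt γ))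
    (hsin : Real.sin (InnerProductGeometry.angle v₁ x) ^ 2 ≤ 1 / (1 + γ)) :
    rayQuot B x / μ₁ ≥
      (γ + 1 + Real.sqrt ((γ - 1) ^ 2 - 4 * γ * (resQuot B x / rayQuot B x) ^ 2)) /
        (2 * ((resQuot B x / rayQuot B x) ^ 2 + 1)) := by
  obtain ⟨htop, hperp⟩ := spectral_bounds B hB μ₁ μ₂ v₁ hBv₁ hμ₁max hsimple hμ₂max
  rw [ge_iff_le]
  set N := ‖x‖ ^ 2 with hN
  have hxn : 0 < ‖x‖ := norm_pos_iff.mpr hx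
  have hN0 : 0 < N := by positivity
  set μ := rayQuot B x with hμdef0
  have hμdef : μ = (⟪B x, x⟫ : ℝ) / ⟪x, x⟫ := by rw [hμdef0, rayQuot]
  have hxx : (⟪x, x⟫ : ℝ) = N := real_inner_self_eq_norm_sq x
  have hμN : μ * N = ⟪B x, x⟫ := by rw [hμdef, hxx]; field_simp
  have hμpos : 0 < μ := hμx
  set ϱ := resQuot B x with hϱdef0
  have hϱdef : ϱ = ‖B x - μ • x‖ / ‖x‖ := by rw [hϱdef0, resQuot, ← hμdef0]
  have hϱ0 : 0 ≤ ϱ := by rw [hϱdef]; positivity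
  have hϱN : ϱ ^ 2 * N = ‖B x - μ • x‖ ^ 2 := by
    rw [hϱdef, div_pow, hN]; field_simp
  set α : ℝ := ⟪v₁, x⟫ with hα
  set y := x - α • v₁ with hy
  have hv₁v₁ : (⟪v₁, v₁⟫ : ℝ) = 1 := by
    rw [real_inner_self_eq_norm_sq, hv₁norm]; norm_num
  have hyperp : (⟪v₁, y⟫ : ℝ) = 0 := by
    rw [hy, inner_sub_right, real_inner_smul_right, hv₁v₁]; ring
  have hxdec : x = α • v₁ + y := by rw [hy]; abel
  have hαsq : ‖α • v₁‖ ^ 2 = α ^ 2 := by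
    rw [norm_smul, hv₁norm, mul_one, Real.norm_eq_abs, sq_abs]
  have hpyth : N = α ^ 2 + ‖y‖ ^ 2 := by
    rw [hN, hxdec, norm_add_sq_real, hαsq, real_inner_smul_left, hyperp]; ring
  have hByv₁ : (⟪v₁, B y⟫ : ℝ) = 0 := by
    rw [← hB v₁ y, hBv₁, real_inner_smul_left, hyperp]; ring
  have hyBv₁ : (⟪B y, v₁⟫ : ℝ) = 0 := by rw [real_inner_comm]; exact hByv₁
  have hBx : B x = (μ₁ * α) • v₁ + B y := by
    rw [hxdec, map_add, map_smul, hBv₁, smul_smul, mul_comm]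
  have hquad : (⟪B x, x⟫ : ℝ) = μ₁ * α ^ 2 + ⟪B y, y⟫ := by
    have h : (⟪B x, x⟫ : ℝ) = ⟪(μ₁ * α) • v₁ + B y, α • v₁ + y⟫ := by rw [← hBx, ← hxdec]
    rw [h, inner_add_left, inner_add_right, inner_add_right, real_inner_smul_left,
      real_inner_smul_left, real_inner_smul_right, real_inner_smul_right, hv₁v₁, hyperp,
      hyBv₁]
    ring
  -- residual decomposition
  have hres : B x - μ • x = ((μ₁ - μ) * α) • v₁ + (B y - μ • y) := by
    rw [hBx]; nth_rewrite 1 [hxdec]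
    module
  have hrperp : (⟪v₁, B y - μ • y⟫ : ℝ) = 0 := by
    rw [inner_sub_right, real_inner_smul_right, hByv₁, hyperp]; ring
  have hrnorm : ‖B x - μ • x‖ ^ 2 = (μ₁ - μ) ^ 2 * α ^ 2 + ‖B y - μ • y‖ ^ 2 := by
    rw [hres, norm_add_sq_real, norm_smul, hv₁norm, real_inner_smul_left, hrperp,
      Real.norm_eq_abs]
    rw [mul_one, sq_abs]
    ring
  -- Cauchy-Schwarz on the perp part
  have hCS : ((⟪B y, y⟫ : ℝ) - μ * ‖y‖ ^ 2) ^ 2 ≤ ‖B y - μ • y‖ ^ 2 * ‖y‖ ^ 2 := by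
    have h1 : (⟪B y - μ • y, y⟫ : ℝ) = ⟪B y, y⟫ - μ * ‖y‖ ^ 2 := by
      rw [inner_sub_left, real_inner_smul_left, real_inner_self_eq_norm_sq]
    have h2 := abs_real_inner_le_norm (B y - μ • y) y
    calc ((⟪B y, y⟫:ℝ) - μ * ‖y‖ ^ 2) ^ 2 = |(⟪B y - μ • y, y⟫ : ℝ)| ^ 2 := by rw [h1, sq_abs]
    _ ≤ (‖B y - μ • y‖ * ‖y‖) ^ 2 := pow_le_pow_left₀ (abs_nonneg _) h2 2
    _ = ‖B y - μ • y‖ ^ 2 * ‖y‖ ^ 2 := by ring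
  -- spectral bounds
  have h5 : (⟪B y, y⟫ : ℝ) ≤ γ * μ₁ * ‖y‖ ^ 2 :=
    le_trans (hperp y hyperp) (mul_le_mul_of_nonneg_right hγμ (by positivity))
  have h6 : μ ≤ μ₁ := by
    have := htop x
    rw [← hμN, ← hN] at this
    exact le_of_mul_le_mul_right this hN0
  -- sine condition  ⇒  γ‖y‖² ≤ α²
  have hsin2 : Real.sin (InnerProductGeometry.angle v₁ x) ^ 2 = 1 - α ^ 2 / N := by
    rw [Real.sin_sq, InnerProductGeometry.cos_angle, hv₁norm, one_mul, ← hα, div_pow, hN]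
  have h7 : γ * ‖y‖ ^ 2 ≤ α ^ 2 := by
    rw [hsin2] at hsin
    have h1γ : 0 < 1 + γ := by linarith [hγ.1]
    have k1 : (1 - α ^ 2 / N) * (1 + γ) ≤ 1 := (le_div_iff₀ h1γ).mp hsin
    have k2 : α ^ 2 / N * N = α ^ 2 := div_mul_cancel₀ _ hN0.ne'
    have k3 := mul_le_mul_of_nonneg_right k1 hN0.le
    have k4 : γ * (α ^ 2 / N) * N = γ * α ^ 2 := by rw [mul_assoc, k2]
    have k5 : γ * N = γ * α ^ 2 + γ * ‖y‖ ^ 2 := by rw [hpyth]; ring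
    linarith only [k3, k2, k4, k5, hpyth]
  -- abbreviations
  set Y := ‖y‖ ^ 2 with hYdef
  set A := α ^ 2 with hAdef
  set βt : ℝ := ⟪B y, y⟫ with hβdef
  set m2 := ‖B y - μ • y‖ ^ 2 with hm2def
  have hY0 : 0 ≤ Y := by positivity
  have hA0 : 0 ≤ A := by positivity
  have hm20 : 0 ≤ m2 := by positivity
  have hϱsq0 : 0 ≤ ϱ ^ 2 := by positivity
  have e3 : ϱ ^ 2 * N = (μ₁ - μ) ^ 2 * A + m2 := by rw [hϱN, hrnorm]
  have e2 : μ * N = μ₁ * A + βt := by rw [hμN, hquad]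
  -- the two master inequalities
  have hIandII : (μ₁ - μ) * (μ - γ * μ₁) ≤ ϱ ^ 2 ∧ γ * (μ₁ - μ) ^ 2 ≤ ϱ ^ 2 := by
    rcases eq_or_lt_of_le hY0 with hYz | hYpos
    · -- y = 0 case : μ = μ₁
      have hβ0 : βt = 0 := by
        have h1 : βt ^ 2 ≤ 0 := by
          have := hCS
          rw [← hYz] at this
          calc βt ^ 2 = (βt - μ * 0) ^ 2 := by ring
          _ ≤ m2 * 0 := this
          _ = 0 := by ring
        have h2 : βt ^ 2 = 0 := le_antisymm h1 (sq_nonneg _)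
        exact pow_eq_zero_iff two_ne_zero |>.mp h2
      have hμeq : μ = μ₁ := by
        have : μ * N = μ₁ * N := by rw [e2, hpyth, ← hYz, hβ0]; ring
        exact mul_right_cancel₀ hN0.ne' this
      constructor
      · rw [hμeq, sub_self, zero_mul]; exact hϱsq0
      · rw [hμeq, sub_self]
        calc γ * 0 ^ 2 = 0 := by ring
        _ ≤ ϱ ^ 2 := hϱsq0
    · have key : μ * Y - βt = (μ₁ - μ) * A := by
        rw [hpyth] at e2; linear_combination e2
      have e4 : ((μ₁ - μ) * A) ^ 2 ≤ m2 * Y := by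
        rw [← key]
        calc (μ * Y - βt) ^ 2 = (βt - μ * Y) ^ 2 := by ring
        _ ≤ m2 * Y := hCS
      have e3Y : ϱ ^ 2 * Y * N = (μ₁ - μ) ^ 2 * A * Y + m2 * Y := by
        linear_combination Y * e3
      have hNAY : (μ₁ - μ) ^ 2 * A * N = ((μ₁ - μ) * A) ^ 2 + (μ₁ - μ) ^ 2 * A * Y := by
        rw [hpyth]; ring
      have h1 : (μ₁ - μ) ^ 2 * A * N ≤ ϱ ^ 2 * Y * N := by
        linarith only [e3Y, e4, hNAY]
      have hcore : (μ₁ - μ) ^ 2 * A ≤ ϱ ^ 2 * Y := le_of_mul_le_mul_right h1 hN0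
      constructor
      · have step1 : (μ - γ * μ₁) * Y ≤ (μ₁ - μ) * A := by linarith only [key, h5]
        have step2 : (μ₁ - μ) * ((μ - γ * μ₁) * Y) ≤ (μ₁ - μ) * ((μ₁ - μ) * A) :=
          mul_le_mul_of_nonneg_left step1 (by linarith only [h6])
        have g2 : (μ₁ - μ) * (μ - γ * μ₁) * Y ≤ ϱ ^ 2 * Y := by
          linarith only [step2, hcore]
        exact le_of_mul_le_mul_right g2 hYpos
      · have g1 : γ * (μ₁ - μ) ^ 2 * Y ≤ ϱ ^ 2 * Y := by
          linarith only [mul_le_mul_of_nonneg_left h7 (sq_nonneg (μ₁ - μ)), hcore]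
        exact le_of_mul_le_mul_right g1 hYpos
  -- normalize and apply the algebraic lemma
  set g := Real.sqrt γ with hgdef
  have hg : 0 < g := Real.sqrt_pos.mpr hγ.1
  have hgγ : g ^ 2 = γ := Real.sq_sqrt hγ.1.le
  have hII : g * (μ₁ - μ) ≤ ϱ := by
    have hsq : (g * (μ₁ - μ)) ^ 2 ≤ ϱ ^ 2 := by
      calc (g * (μ₁ - μ)) ^ 2 = γ * (μ₁ - μ) ^ 2 := by rw [mul_pow, hgγ]
      _ ≤ ϱ ^ 2 := hIandII.2
    exact le_of_pow_le_pow_left₀ two_ne_zero hϱ0 hsq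
  have hdivle : ∀ a b c : ℝ, 0 < c → a ≤ b → a / c ≤ b / c := by
    intro a b c hc h; gcongr
  have hμ₁2 : (0:ℝ) < μ₁ ^ 2 := by positivity
  have hI' : (1 - μ / μ₁) * (μ / μ₁ - γ) ≤ (ϱ / μ) ^ 2 * (μ / μ₁) ^ 2 := by
    have hA1 : (ϱ / μ) ^ 2 * (μ / μ₁) ^ 2 = ϱ ^ 2 / μ₁ ^ 2 := by
      field_simp
    have hA2 : (1 - μ / μ₁) * (μ / μ₁ - γ) = (μ₁ - μ) * (μ - γ * μ₁) / μ₁ ^ 2 := by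
      field_simp
    rw [hA1, hA2]
    exact hdivle _ _ _ hμ₁2 hIandII.1
  have hII' : g * (1 - μ / μ₁) ≤ (ϱ / μ) * (μ / μ₁) := by
    have hA1 : (ϱ / μ) * (μ / μ₁) = ϱ / μ₁ := by field_simp
    have hA2 : g * (1 - μ / μ₁) = g * (μ₁ - μ) / μ₁ := by field_simp
    rw [hA1, hA2]
    exact hdivle _ _ _ hμ₁pos hII
  have hτ2' : 2 * g * (ϱ / μ) ≤ 1 - γ := by
    have := (le_div_iff₀ (by positivity : (0:ℝ) < 2 * g)).mp hτ
    linarith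
  have ht1 : μ / μ₁ ≤ 1 := (div_le_one hμ₁pos).mpr h6
  exact alg_key γ g (ϱ / μ) (μ / μ₁) hg hgγ hγ.2 (by positivity) ht1 (by positivity) hI' hII' hτ2'
end
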